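/- arXiv:1704.04932 — 6 statements merged into one kernel-verified Lean document; each statement's English description precedes it below -/
import Mathlib

section
/- Let n ≥ 1, β > 0, t > 0, and let f : ℝⁿ → ℝ be continuous and bounded. Define u(x,t) = −β⁻¹ log( ∫_{ℝⁿ} G_{β⁻¹ t}(x−y) exp(−β f(y)) dy ) where G_s(x) = (2πs)^{−n/2} exp(−‖x‖²/(2s)). For each x let ρ₁(y; x) = Z₁(x)⁻¹ exp(−β f(y) − (β/(2t))‖x−y‖²), where Z₁(x) = ∫_{ℝⁿ} exp(−β f(y) − (β/(2t))‖x−y‖²) dy. Then the spatial gradient of u satisfies ∇u(x,t) = ∫_{ℝⁿ} ((x−y)/t) ρ₁(y; x) dy for every x ∈ ℝⁿ. -/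
/-!
Up to the factor `(2π t/β)^{-n/2}`, the integrand `G_{t/β}(x - y) e^{-β f(y)}` of `u` is
`e^{-β f(y) - (β/2t)‖x - y‖²}`, so `u(·, t) = const - β⁻¹ log Z₁`. Since `e^{-β f}` is bounded,
`Z₁` may be differentiated under the integral sign: on the unit ball around `x` the derivative
of the integrand is dominated by an integrable Gaussian centred at `x`. Then
`∇ log Z₁ = ∇Z₁ / Z₁` is the average of `-(β/t)(x - y)` against the Gibbs density `ρ₁`.
-/

open Real MeasureTheory

/-- The heat kernel `G_s(x) = (2πs)^{-n/2} exp(-‖x‖²/(2s))`. -/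
noncomputable def heatKernel {n : ℕ} (s : ℝ) (x : EuclideanSpace ℝ (Fin n)) : ℝ :=
  (2 * Real.pi * s) ^ (-(n : ℝ) / 2) * Real.exp (-‖x‖ ^ 2 / (2 * s))

/-- The local entropy `u(x,t) = -β⁻¹ log( ∫ G_{β⁻¹ t}(x-y) exp(-β f(y)) dy )`. -/
noncomputable def localEntropy {n : ℕ} (β : ℝ) (f : EuclideanSpace ℝ (Fin n) → ℝ)
    (x : EuclideanSpace ℝ (Fin n)) (t : ℝ) : ℝ :=
  -β⁻¹ * Real.log (∫ y, heatKernel (β⁻¹ * t) (x - y) * Real.exp (-β * f y))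

/-- The normalizing constant `Z₁(x) = ∫ exp(-β f(y) - (β/(2t))‖x-y‖²) dy`. -/
noncomputable def Z1 {n : ℕ} (β t : ℝ) (f : EuclideanSpace ℝ (Fin n) → ℝ)
    (x : EuclideanSpace ℝ (Fin n)) : ℝ :=
  ∫ y, Real.exp (-β * f y - (β / (2 * t)) * ‖x - y‖ ^ 2)

/-- The Gibbs density `ρ₁(y; x) = Z₁(x)⁻¹ exp(-β f(y) - (β/(2t))‖x-y‖²)`. -/
noncomputable def rho1 {n : ℕ} (β t : ℝ) (f : EuclideanSpace ℝ (Fin n) → ℝ)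
    (x y : EuclideanSpace ℝ (Fin n)) : ℝ :=
  (Z1 β t f x)⁻¹ * Real.exp (-β * f y - (β / (2 * t)) * ‖x - y‖ ^ 2)

open InnerProductSpace Metric
open scoped Topology

section Gradient

variable {E : Type*} [NormedAddCommGroup E] [InnerProductSpace ℝ E] [CompleteSpace E]
  {f : E → ℝ} {f' x : E}

theorem HasGradientAt.const_add (c : ℝ) (hf : HasGradientAt f f' x) :
    HasGradientAt (fun y => c + f y) f' x :=
  hasGradientAt_iff_hasFDerivAt.2 ((hasGradientAt_iff_hasFDerivAt.1 hf).const_add (c := c))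

theorem HasGradientAt.const_mul (c : ℝ) (hf : HasGradientAt f f' x) :
    HasGradientAt (fun y => c * f y) (c • f') x := by
  rw [hasGradientAt_iff_hasFDerivAt, map_smulₛₗ, conj_trivial]
  exact (hasGradientAt_iff_hasFDerivAt.1 hf).const_mul c

theorem HasGradientAt.log (hf : HasGradientAt f f' x) (hx : f x ≠ 0) :
    HasGradientAt (fun y => Real.log (f y)) ((f x)⁻¹ • f') x := by
  rw [hasGradientAt_iff_hasFDerivAt, map_smulₛₗ, conj_trivial]
  exact (hasGradientAt_iff_hasFDerivAt.1 hf).log hx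

theorem hasGradientAt_integral_of_dominated_of_gradient_le {α : Type*} [MeasurableSpace α]
    {μ : Measure α} {F : E → α → ℝ} {F' : E → α → E} {x₀ : E} {s : Set E} {bound : α → ℝ}
    (hs : s ∈ 𝓝 x₀) (hF_meas : ∀ᶠ x in 𝓝 x₀, AEStronglyMeasurable (F x) μ)
    (hF_int : Integrable (F x₀) μ) (hF'_meas : AEStronglyMeasurable (F' x₀) μ)
    (h_bound : ∀ᵐ a ∂μ, ∀ x ∈ s, ‖F' x a‖ ≤ bound a) (bound_integrable : Integrable bound μ)
    (h_diff : ∀ᵐ a ∂μ, ∀ x ∈ s, HasGradientAt (F · a) (F' x a) x) :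
    HasGradientAt (fun x => ∫ a, F x a ∂μ) (∫ a, F' x₀ a ∂μ) x₀ := by
  have hF'_int : Integrable (F' x₀) μ :=
    bound_integrable.mono' hF'_meas (h_bound.mono fun a ha => ha x₀ (mem_of_mem_nhds hs))
  rw [hasGradientAt_iff_hasFDerivAt]
  change HasFDerivAt _ (innerSL ℝ (∫ a, F' x₀ a ∂μ)) x₀
  rw [← ContinuousLinearMap.integral_comp_commSL (by simp) (innerSL ℝ) hF'_int]
  refine hasFDerivAt_integral_of_dominated_of_fderiv_le (F' := fun x a => innerSL ℝ (F' x a))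
    hs hF_meas hF_int ((innerSL ℝ).continuous.comp_aestronglyMeasurable hF'_meas) ?_
    bound_integrable ?_
  · simpa only [innerSL_apply_norm] using h_bound
  · exact h_diff.mono fun a ha x hx => hasGradientAt_iff_hasFDerivAt.1 (ha x hx)

theorem hasGradientAt_exp_neg_mul_norm_sub_sq (a : ℝ) (x y : E) :
    HasGradientAt (fun x => exp (-a * ‖x - y‖ ^ 2))
      ((-2 * a * exp (-a * ‖x - y‖ ^ 2)) • (x - y)) x := by
  rw [hasGradientAt_iff_hasFDerivAt]
  refine (((hasFDerivAt_id x).sub_const y).norm_sq.const_mul (-a)).exp.congr_fderiv ?_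
  ext v
  simp only [smul_apply, ContinuousLinearMap.comp_id, coe_innerSL_apply, toDual_apply_apply,
    real_inner_smul_left, id_eq, nsmul_eq_mul, smul_eq_mul]
  ring

end Gradient

theorem mul_exp_neg_mul_sq_le {c : ℝ} (hc : 0 < c) {r s : ℝ} (hs : 0 ≤ s)
    (hsr : s ≤ r + 1) (hrs : r ≤ s + 1) :
    s * exp (-c * s ^ 2) ≤ exp (2 * c + 2 / c) * exp (-(c / 4) * r ^ 2) := by
  -- `s ≤ eʳ` absorbs the linear factor; `s² ≥ r²/2 - 2` moves the Gaussian decay from `s` to `r`.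
  have h_sq : r ^ 2 / 2 - 2 ≤ s ^ 2 := by nlinarith [sq_nonneg (r - 2), sq_nonneg (s - r + 1)]
  have h_exp : exp (-c * s ^ 2) ≤ exp (2 * c) * exp (-(c / 2) * r ^ 2) := by
    rw [← exp_add, exp_le_exp]
    nlinarith
  have h_lin : s ≤ exp (2 / c) * exp ((c / 4) * r ^ 2) := by
    have hc2 : c * (2 / c) = 2 := by field_simp
    refine hsr.trans ((add_one_le_exp r).trans ?_)
    rw [← exp_add, exp_le_exp]
    nlinarith [sq_nonneg (c * r - 2), mul_pos hc hc, sq_nonneg r]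
  calc s * exp (-c * s ^ 2)
      ≤ (exp (2 / c) * exp ((c / 4) * r ^ 2)) * (exp (2 * c) * exp (-(c / 2) * r ^ 2)) :=
        mul_le_mul h_lin h_exp (exp_nonneg _) (by positivity)
    _ = exp (2 * c + 2 / c) * exp (-(c / 4) * r ^ 2) := by
        simp only [← exp_add]
        ring_nf

theorem norm_sub_mul_exp_le_of_mem_ball {E : Type*} [SeminormedAddCommGroup E] {a : ℝ}
    (ha : 0 < a) {x x' : E} (hx' : x' ∈ ball x 1) (y : E) :
    ‖x' - y‖ * exp (-a * ‖x' - y‖ ^ 2) ≤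
      exp (2 * a + 2 / a) * exp (-(a / 4) * ‖x - y‖ ^ 2) := by
  have hxx' : ‖x' - x‖ < 1 := by rwa [← dist_eq_norm]
  refine mul_exp_neg_mul_sq_le ha (norm_nonneg _) ?_ ?_
  · linarith [norm_sub_le_norm_sub_add_norm_sub x' x y]
  · linarith [norm_sub_le_norm_sub_add_norm_sub x x' y, norm_sub_rev x x']

section Gaussian

variable {E : Type*} [NormedAddCommGroup E] [InnerProductSpace ℝ E] [FiniteDimensional ℝ E]
  [MeasurableSpace E] [BorelSpace E] {a C : ℝ} {φ : E → ℝ}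

theorem integrable_exp_neg_mul_norm_sub_sq (ha : 0 < a) (x : E) :
    Integrable (fun y : E => exp (-a * ‖x - y‖ ^ 2)) := by
  have h := (GaussianFourier.integrable_cexp_neg_mul_sq_norm_add
    (V := E) (b := (a : ℂ)) (by simpa using ha) 0 0).norm
  suffices h' : Integrable (fun v : E => exp (-a * ‖v‖ ^ 2)) from h'.comp_sub_left x
  refine h.congr (Filter.Eventually.of_forall fun v => ?_)
  simp only [Complex.norm_exp, zero_mul, add_zero,
    show -(a : ℂ) * (‖v‖ : ℂ) ^ 2 = ((-a * ‖v‖ ^ 2 : ℝ) : ℂ) by push_cast; ring,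
    Complex.ofReal_re]

noncomputable def gaussianConv (a : ℝ) (φ : E → ℝ) (x : E) : ℝ :=
  ∫ y, φ y * exp (-a * ‖x - y‖ ^ 2)

theorem integrable_mul_exp_neg_mul_norm_sub_sq (ha : 0 < a) (hφ : AEStronglyMeasurable φ)
    (hφC : ∀ y, ‖φ y‖ ≤ C) (x : E) :
    Integrable (fun y => φ y * exp (-a * ‖x - y‖ ^ 2)) :=
  (integrable_exp_neg_mul_norm_sub_sq ha x).bdd_mul hφ (ae_of_all _ hφC)

theorem gaussianConv_pos (ha : 0 < a) (hφ : AEStronglyMeasurable φ) (hφC : ∀ y, ‖φ y‖ ≤ C)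
    (hφ_pos : ∀ y, 0 < φ y) (x : E) : 0 < gaussianConv a φ x := by
  have h_pos : ∀ y, 0 < φ y * exp (-a * ‖x - y‖ ^ 2) := fun y => mul_pos (hφ_pos y) (exp_pos _)
  refine (integral_pos_iff_support_of_nonneg (fun y => (h_pos y).le)
    (integrable_mul_exp_neg_mul_norm_sub_sq ha hφ hφC x)).2 ?_
  rw [Function.support_eq_univ fun y => (h_pos y).ne']
  exact Measure.measure_univ_pos.2 (NeZero.ne _)

theorem hasGradientAt_gaussianConv (ha : 0 < a) (hφ : AEStronglyMeasurable φ)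
    (hφC : ∀ y, ‖φ y‖ ≤ C) (x : E) :
    HasGradientAt (gaussianConv a φ)
      (∫ y, (φ y * exp (-a * ‖x - y‖ ^ 2)) • ((-2 * a) • (x - y))) x := by
  have h_bound : ∀ y, ∀ x' ∈ ball x 1,
      ‖(φ y * exp (-a * ‖x' - y‖ ^ 2)) • ((-2 * a) • (x' - y))‖ ≤
        2 * a * C * exp (2 * a + 2 / a) * exp (-(a / 4) * ‖x - y‖ ^ 2) := by
    intro y x' hx'
    have hC : 0 ≤ C := (norm_nonneg _).trans (hφC 0)
    calc ‖(φ y * exp (-a * ‖x' - y‖ ^ 2)) • ((-2 * a) • (x' - y))‖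
        = ‖φ y‖ * (2 * a) * (‖x' - y‖ * exp (-a * ‖x' - y‖ ^ 2)) := by
          simp only [norm_smul, norm_mul, Real.norm_eq_abs, abs_exp, abs_neg, abs_two,
            abs_of_pos ha]
          ring
      _ ≤ C * (2 * a) * (exp (2 * a + 2 / a) * exp (-(a / 4) * ‖x - y‖ ^ 2)) :=
          mul_le_mul (mul_le_mul_of_nonneg_right (hφC y) (by positivity))
            (norm_sub_mul_exp_le_of_mem_ball ha hx' y) (by positivity) (by positivity)
      _ = 2 * a * C * exp (2 * a + 2 / a) * exp (-(a / 4) * ‖x - y‖ ^ 2) := by ring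
  refine hasGradientAt_integral_of_dominated_of_gradient_le (ball_mem_nhds x one_pos)
    (.of_forall fun x' => (integrable_mul_exp_neg_mul_norm_sub_sq ha hφ hφC x').1)
    (integrable_mul_exp_neg_mul_norm_sub_sq ha hφ hφC x) ?_ (ae_of_all _ h_bound)
    ((integrable_exp_neg_mul_norm_sub_sq (by positivity) x).const_mul _) ?_
  · exact (hφ.mul (by fun_prop)).smul (by fun_prop)
  · refine ae_of_all _ fun y x' _ => ?_
    convert (hasGradientAt_exp_neg_mul_norm_sub_sq a x' y).const_mul (φ y) using 1
    module

theorem hasGradientAt_log_gaussianConv (ha : 0 < a) (hφ : AEStronglyMeasurable φ)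
    (hφC : ∀ y, ‖φ y‖ ≤ C) {x : E} (hx : gaussianConv a φ x ≠ 0) :
    HasGradientAt (fun x => log (gaussianConv a φ x))
      (∫ y, ((gaussianConv a φ x)⁻¹ * (φ y * exp (-a * ‖x - y‖ ^ 2))) •
        ((-2 * a) • (x - y))) x := by
  simpa only [← integral_smul, mul_smul] using (hasGradientAt_gaussianConv ha hφ hφC x).log hx

end Gaussian

theorem Z1_eq_gaussianConv {n : ℕ} (β t : ℝ) (f : EuclideanSpace ℝ (Fin n) → ℝ) :
    Z1 β t f = gaussianConv (β / (2 * t)) (fun y => exp (-β * f y)) := by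
  ext x
  refine integral_congr_ae (ae_of_all _ fun y => ?_)
  simp only [← exp_add]
  ring_nf

theorem localEntropy_eq_log_Z1 {n : ℕ} {β t : ℝ} (hβ : 0 < β) (ht : 0 < t)
    {f : EuclideanSpace ℝ (Fin n) → ℝ} {x : EuclideanSpace ℝ (Fin n)} (hZ : 0 < Z1 β t f x) :
    localEntropy β f x t =
      -β⁻¹ * log ((2 * π * (β⁻¹ * t)) ^ (-(n : ℝ) / 2)) + -β⁻¹ * log (Z1 β t f x) := by
  have hC : 0 < (2 * π * (β⁻¹ * t)) ^ (-(n : ℝ) / 2) := by positivity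
  have h_integrand : ∀ y, heatKernel (β⁻¹ * t) (x - y) * exp (-β * f y) =
      (2 * π * (β⁻¹ * t)) ^ (-(n : ℝ) / 2) * exp (-β * f y - (β / (2 * t)) * ‖x - y‖ ^ 2) := by
    intro y
    rw [heatKernel, mul_assoc, ← exp_add]
    congr 2
    field_simp
    ring
  rw [localEntropy, funext h_integrand, integral_const_mul]
  change -β⁻¹ * log (_ * Z1 β t f x) = _
  rw [log_mul hC.ne' hZ.ne']
  ring

theorem stmt_2_general (n : ℕ) (β t : ℝ) (hβ : 0 < β) (ht : 0 < t)
    (f : EuclideanSpace ℝ (Fin n) → ℝ) (hf : Continuous f)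
    (hfb : ∃ M, ∀ x, |f x| ≤ M) :
    ∀ x, gradient (fun x' => localEntropy β f x' t) x
      = ∫ y, rho1 β t f x y • ((1 / t) • (x - y)) := by
  intro x
  obtain ⟨M, hM⟩ := hfb
  have ha : 0 < β / (2 * t) := by positivity
  have hφ : AEStronglyMeasurable fun y => exp (-β * f y) := by fun_prop
  have hφM : ∀ y, ‖exp (-β * f y)‖ ≤ exp (β * M) := by
    intro y
    rw [norm_of_nonneg (exp_nonneg _), exp_le_exp]
    nlinarith [neg_abs_le (f y), hM y]
  have hG_pos := gaussianConv_pos ha hφ hφM fun _ => exp_pos _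
  have hZ_pos : ∀ x, 0 < Z1 β t f x := by rwa [Z1_eq_gaussianConv]
  have h_grad := ((hasGradientAt_log_gaussianConv ha hφ hφM (hG_pos x).ne').const_mul
    (-β⁻¹)).const_add (-β⁻¹ * log ((2 * π * (β⁻¹ * t)) ^ (-(n : ℝ) / 2)))
  rw [funext fun x' => localEntropy_eq_log_Z1 hβ ht (hZ_pos x')]
  simp only [rho1, Z1_eq_gaussianConv]
  rw [h_grad.gradient, ← integral_smul]
  refine integral_congr_ae (ae_of_all _ fun y => ?_)
  simp only [smul_smul, ← exp_add, neg_mul, ← sub_eq_add_neg]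
  congr 1
  field_simp

/-- The spatial gradient of the local entropy is the average of `(x-y)/t` against
the Gibbs density `ρ₁(y; x)`. -/
theorem stmt_2 (n : ℕ) (hn : 1 ≤ n) (β t : ℝ) (hβ : 0 < β) (ht : 0 < t)
    (f : EuclideanSpace ℝ (Fin n) → ℝ) (hf : Continuous f)
    (hfb : ∃ M, ∀ x, |f x| ≤ M) :
    ∀ x, gradient (fun x' => localEntropy β f x' t) x
      = ∫ y, rho1 β t f x y • ((1 / t) • (x - y)) :=
  stmt_2_general n β t hβ ht f hf hfb
end

section
/- Let n ≥ 1, t > 0, and let f : ℝⁿ → ℝ be continuous and bounded. Define the Hopf–Lax (inf-convolution) function u(x,t) = inf_{y ∈ ℝⁿ} { f(y) + ‖x−y‖²/(2t) }. Fix x ∈ ℝⁿ. Then the infimum is attained; moreover, if it is attained at a unique point y* ∈ ℝⁿ, then u(·,t) is differentiable at x with ∇u(x,t) = (x − y*)/t, and if in addition f is differentiable at y*, then ∇f(y*) = (x − y*)/t. -/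
open Real Set Filter Topology InnerProductSpace

variable {E : Type*} [NormedAddCommGroup E] [InnerProductSpace ℝ E] [FiniteDimensional ℝ E]

local notation "⟪" x ", " y "⟫" => @inner ℝ _ _ x y

lemma hl_key (a b y : E) : ‖a - y‖ ^ 2 = ‖b - y‖ ^ 2 + 2 * ⟪b - y, a - b⟫ + ‖a - b‖ ^ 2 := by
  have h : a - y = (b - y) + (a - b) := by abel
  rw [h, norm_add_sq_real]

section hl
variable {t : ℝ} (ht : 0 < t) {f : E → ℝ} (hf : Continuous f) {M : ℝ} (hM : ∀ y, |f y| ≤ M)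

include ht hM in
lemma hl_bddBelow (a : E) : BddBelow (Set.range fun y => f y + ‖a - y‖ ^ 2 / (2 * t)) := by
  refine ⟨-M, ?_⟩
  rintro r ⟨y, rfl⟩
  have h1 := (abs_le.mp (hM y)).1
  have h2 : 0 ≤ ‖a - y‖ ^ 2 / (2 * t) := by positivity
  linarith

include ht hM in
lemma hl_bound (a y : E) (hy : ∀ z, f y + ‖a - y‖ ^ 2 / (2 * t) ≤ f z + ‖a - z‖ ^ 2 / (2 * t)) :
    ‖a - y‖ ≤ Real.sqrt (4 * M * t) := by
  have hMa := abs_le.mp (hM a)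
  have hMy := abs_le.mp (hM y)
  have h := hy a
  simp only [sub_self, norm_zero] at h
  norm_num at h
  have hq : ‖a - y‖ ^ 2 ≤ 4 * M * t := by
    have h2 : ‖a - y‖ ^ 2 / (2 * t) ≤ 2 * M := by linarith
    rw [div_le_iff₀ (by linarith)] at h2
    nlinarith
  calc ‖a - y‖ = Real.sqrt (‖a - y‖ ^ 2) := (Real.sqrt_sq (norm_nonneg _)).symm
    _ ≤ Real.sqrt (4 * M * t) := Real.sqrt_le_sqrt hq

include ht hf hM in
lemma hl_exists (a : E) :
    ∃ y, ∀ z, f y + ‖a - y‖ ^ 2 / (2 * t) ≤ f z + ‖a - z‖ ^ 2 / (2 * t) := by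
  set g : E → ℝ := fun y => f y + ‖a - y‖ ^ 2 / (2 * t) with hg
  have hgc : Continuous g := by
    apply hf.add
    exact ((continuous_const.sub continuous_id).norm.pow 2).div_const _
  set R : ℝ := Real.sqrt (4 * M * t) with hR
  have hR0 : 0 ≤ R := Real.sqrt_nonneg _
  have hK : IsCompact (Metric.closedBall a R) := isCompact_closedBall a R
  obtain ⟨y, hyK, hymin⟩ := hK.exists_isMinOn ⟨a, Metric.mem_closedBall_self hR0⟩
    hgc.continuousOn
  refine ⟨y, fun z => ?_⟩
  by_cases hz : z ∈ Metric.closedBall a R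
  · exact hymin hz
  · have hga : g y ≤ g a := hymin (Metric.mem_closedBall_self hR0)
    have hMa := abs_le.mp (hM a)
    have hMz := abs_le.mp (hM z)
    have hzR : R < ‖a - z‖ := by
      rw [Metric.mem_closedBall, dist_comm] at hz
      push_neg at hz
      rwa [dist_eq_norm] at hz
    have hM0 : 0 ≤ M := (abs_nonneg _).trans (hM a)
    have h4 : 4 * M * t ≤ ‖a - z‖ ^ 2 := by
      have := Real.sq_sqrt (by positivity : (0:ℝ) ≤ 4 * M * t)
      nlinarith [hzR, hR0]
    have : 2 * M ≤ ‖a - z‖ ^ 2 / (2 * t) := by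
      rw [le_div_iff₀ (by linarith)]; nlinarith
    simp only [hg] at *
    simp only [sub_self, norm_zero] at hga
    norm_num at hga
    linarith
end hl

section hl2
variable {t : ℝ} (ht : 0 < t) {f : E → ℝ} (hf : Continuous f) {M : ℝ} (hM : ∀ y, |f y| ≤ M)

include ht hM in
lemma hl_inf_eq (a y : E)
    (hy : ∀ z, f y + ‖a - y‖ ^ 2 / (2 * t) ≤ f z + ‖a - z‖ ^ 2 / (2 * t)) :
    (⨅ z, (f z + ‖a - z‖ ^ 2 / (2 * t))) = f y + ‖a - y‖ ^ 2 / (2 * t) :=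
  le_antisymm (ciInf_le (hl_bddBelow ht hM a) y) (le_ciInf hy)

include ht hf hM in
lemma hl_close (x ystar : E)
    (hmin : ∀ z, f ystar + ‖x - ystar‖ ^ 2 / (2 * t) ≤ f z + ‖x - z‖ ^ 2 / (2 * t))
    (huniq : ∀ y', (∀ z, f y' + ‖x - y'‖ ^ 2 / (2 * t) ≤ f z + ‖x - z‖ ^ 2 / (2 * t)) →
      y' = ystar) :
    ∀ ε > 0, ∃ δ > 0, ∀ x' y', dist x' x < δ →
      (∀ z, f y' + ‖x' - y'‖ ^ 2 / (2 * t) ≤ f z + ‖x' - z‖ ^ 2 / (2 * t)) →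
      dist y' ystar < ε := by
  by_contra hcon
  push_neg at hcon
  obtain ⟨ε, hε, hcon⟩ := hcon
  have hseq : ∀ k : ℕ, ∃ x' y', dist x' x < 1 / (k + 1) ∧
      (∀ z, f y' + ‖x' - y'‖ ^ 2 / (2 * t) ≤ f z + ‖x' - z‖ ^ 2 / (2 * t)) ∧
      ε ≤ dist y' ystar := by
    intro k
    obtain ⟨x', y', h1, h2, h3⟩ := hcon (1 / (k + 1)) (by positivity)
    exact ⟨x', y', h1, h2, h3⟩
  choose xs ys h1 h2 h3 using hseq
  have hxs : Tendsto xs atTop (𝓝 x) := by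
    rw [tendsto_iff_dist_tendsto_zero]
    exact squeeze_zero (fun k => dist_nonneg) (fun k => (h1 k).le)
      tendsto_one_div_add_atTop_nhds_zero_nat
  set R : ℝ := Real.sqrt (4 * M * t) with hR
  have hysK : ∀ k, ys k ∈ Metric.closedBall x (R + 1) := by
    intro k
    have hb := hl_bound ht hM (xs k) (ys k) (h2 k)
    have hk1 : dist (xs k) x < 1 := (h1 k).trans_le (by
      rw [div_le_one (by positivity)]; linarith [Nat.cast_nonneg (α := ℝ) k])
    have : dist (ys k) x ≤ dist (ys k) (xs k) + dist (xs k) x := dist_triangle _ _ _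
    rw [Metric.mem_closedBall]
    have hb' : dist (ys k) (xs k) ≤ R := by rw [dist_eq_norm, norm_sub_rev]; exact hb
    linarith
  obtain ⟨yhat, hyhatK, φ, hφ, hconv⟩ :=
    (isCompact_closedBall x (R + 1)).tendsto_subseq hysK
  have hxsφ : Tendsto (xs ∘ φ) atTop (𝓝 x) := hxs.comp hφ.tendsto_atTop
  -- yhat is a minimizer for x
  have hyhat_min : ∀ z, f yhat + ‖x - yhat‖ ^ 2 / (2 * t) ≤ f z + ‖x - z‖ ^ 2 / (2 * t) := by
    intro z
    have hG : Continuous (fun p : E × E => f p.2 + ‖p.1 - p.2‖ ^ 2 / (2 * t)) := by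
      apply (hf.comp continuous_snd).add
      exact (((continuous_fst.sub continuous_snd).norm.pow 2).div_const _)
    have hpair : Tendsto (fun k => ((xs ∘ φ) k, (ys ∘ φ) k)) atTop (𝓝 (x, yhat)) :=
      hxsφ.prodMk_nhds hconv
    have hL : Tendsto (fun k => f ((ys ∘ φ) k) + ‖(xs ∘ φ) k - (ys ∘ φ) k‖ ^ 2 / (2 * t))
        atTop (𝓝 (f yhat + ‖x - yhat‖ ^ 2 / (2 * t))) :=
      (hG.tendsto _).comp hpair
    have hRt : Tendsto (fun k => f z + ‖(xs ∘ φ) k - z‖ ^ 2 / (2 * t))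
        atTop (𝓝 (f z + ‖x - z‖ ^ 2 / (2 * t))) := by
      have hGz : Continuous (fun a : E => f z + ‖a - z‖ ^ 2 / (2 * t)) :=
        continuous_const.add (((continuous_id.sub continuous_const).norm.pow 2).div_const _)
      exact (hGz.tendsto _).comp hxsφ
    exact le_of_tendsto_of_tendsto' hL hRt (fun k => h2 (φ k) z)
  have heq : yhat = ystar := huniq yhat hyhat_min
  have hdist : ε ≤ dist yhat ystar := by
    have : Tendsto (fun k => dist ((ys ∘ φ) k) ystar) atTop (𝓝 (dist yhat ystar)) :=
      (Continuous.dist continuous_id continuous_const).continuousAt.tendsto.comp hconv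
    exact le_of_tendsto_of_tendsto' tendsto_const_nhds this (fun k => h3 (φ k))
  rw [heq] at hdist
  simp at hdist
  linarith
end hl2

section hl3
variable {t : ℝ} (ht : 0 < t) {f : E → ℝ} (hf : Continuous f) {M : ℝ} (hM : ∀ y, |f y| ≤ M)

include ht hf hM in
lemma hl_grad (x ystar : E)
    (hmin : ∀ z, f ystar + ‖x - ystar‖ ^ 2 / (2 * t) ≤ f z + ‖x - z‖ ^ 2 / (2 * t))
    (huniq : ∀ y', (∀ z, f y' + ‖x - y'‖ ^ 2 / (2 * t) ≤ f z + ‖x - z‖ ^ 2 / (2 * t)) →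
      y' = ystar) :
    HasGradientAt (fun x' => ⨅ y, (f y + ‖x' - y‖ ^ 2 / (2 * t)))
      ((1 / t) • (x - ystar)) x := by
  choose sel hsel using fun a : E => hl_exists ht hf hM a
  set v : E := (1 / t) • (x - ystar) with hv
  rw [hasGradientAt_iff_isLittleO, Asymptotics.isLittleO_iff]
  intro c hc
  obtain ⟨δ₁, hδ₁, hclose⟩ := hl_close ht hf hM x ystar hmin huniq (c * t / 2) (by positivity)
  have hδ : (0:ℝ) < min δ₁ (c * t) := lt_min hδ₁ (by positivity)
  filter_upwards [Metric.ball_mem_nhds x hδ] with x' hx'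
  have hx'1 : dist x' x < δ₁ := (Metric.mem_ball.mp hx').trans_le (min_le_left _ _)
  have hx'2 : ‖x' - x‖ < c * t := by
    have := (Metric.mem_ball.mp hx').trans_le (min_le_right _ _)
    rwa [dist_eq_norm] at this
  have hclose' : dist (sel x') ystar < c * t / 2 := hclose x' (sel x') hx'1 (hsel x')
  have hux : (⨅ z, (f z + ‖x - z‖ ^ 2 / (2 * t))) = f ystar + ‖x - ystar‖ ^ 2 / (2 * t) :=
    hl_inf_eq ht hM x ystar hmin
  have hux' : (⨅ z, (f z + ‖x' - z‖ ^ 2 / (2 * t)))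
      = f (sel x') + ‖x' - sel x'‖ ^ 2 / (2 * t) := hl_inf_eq ht hM x' (sel x') (hsel x')
  have hupper : (⨅ z, (f z + ‖x' - z‖ ^ 2 / (2 * t)))
      ≤ f ystar + ‖x' - ystar‖ ^ 2 / (2 * t) := ciInf_le (hl_bddBelow ht hM x') ystar
  have hlower : (⨅ z, (f z + ‖x - z‖ ^ 2 / (2 * t)))
      ≤ f (sel x') + ‖x - sel x'‖ ^ 2 / (2 * t) := ciInf_le (hl_bddBelow ht hM x) (sel x')
  set A : ℝ := ⟪x - ystar, x' - x⟫ with hA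
  set D : ℝ := ⟪ystar - sel x', x' - x⟫ with hD
  set nx : ℝ := ‖x' - x‖ with hnx
  have hkey1 : ‖x' - ystar‖ ^ 2 = ‖x - ystar‖ ^ 2 + 2 * A + nx ^ 2 := hl_key x' x ystar
  have hkey2 : ‖x' - sel x'‖ ^ 2 = ‖x - sel x'‖ ^ 2 + 2 * (A + D) + nx ^ 2 := by
    rw [hl_key x' x (sel x')]
    have : (⟪x - sel x', x' - x⟫ : ℝ) = A + D := by
      rw [hA, hD, ← inner_add_left]
      congr 1
      abel
    rw [this]
  have hinner : (⟪v, x' - x⟫ : ℝ) = (1 / t) * A := real_inner_smul_left _ _ _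
  have hnm : ‖ystar - sel x'‖ < c * t / 2 := by
    rw [← dist_eq_norm, dist_comm]
    exact hclose'
  have hcs : -(‖ystar - sel x'‖ * nx) ≤ D := (abs_le.mp (abs_real_inner_le_norm _ _)).1
  have hnx0 : 0 ≤ nx := norm_nonneg _
  have hDlb : -(c * t / 2 * nx) ≤ D := le_trans (by nlinarith) hcs
  -- upper estimate
  have e1 : (‖x - ystar‖ ^ 2 + 2 * A + nx ^ 2) / (2 * t) - ‖x - ystar‖ ^ 2 / (2 * t)
      - (1 / t) * A = nx ^ 2 / (2 * t) := by field_simp; ring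
  have hup : (⨅ z, (f z + ‖x' - z‖ ^ 2 / (2 * t))) - (⨅ z, (f z + ‖x - z‖ ^ 2 / (2 * t)))
      - ⟪v, x' - x⟫ ≤ nx ^ 2 / (2 * t) := by
    rw [hinner, hux]
    rw [hkey1] at hupper
    linarith
  -- lower estimate
  have e2 : (‖x - sel x'‖ ^ 2 + 2 * (A + D) + nx ^ 2) / (2 * t) - ‖x - sel x'‖ ^ 2 / (2 * t)
      = (1 / t) * A + (1 / t) * D + nx ^ 2 / (2 * t) := by field_simp; ring
  have hlo : (1 / t) * D + nx ^ 2 / (2 * t)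
      ≤ (⨅ z, (f z + ‖x' - z‖ ^ 2 / (2 * t))) - (⨅ z, (f z + ‖x - z‖ ^ 2 / (2 * t)))
      - ⟪v, x' - x⟫ := by
    rw [hinner, hux', hkey2]
    linarith [hlower, e2]
  have hb1 : nx ^ 2 / (2 * t) ≤ c / 2 * nx := by
    rw [div_le_iff₀ (by linarith)]
    nlinarith
  have hb2 : -(c / 2 * nx) ≤ (1 / t) * D := by
    rw [one_div, inv_mul_eq_div, le_div_iff₀ ht]
    have he : -(c / 2 * nx) * t = -(c * t / 2 * nx) := by ring
    linarith [hDlb]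
  have hb3 : 0 ≤ nx ^ 2 / (2 * t) := by positivity
  rw [Real.norm_eq_abs, abs_le]
  constructor
  · rw [hnx] at hb2 hb3 hlo ⊢
    linarith
  · rw [hnx] at hb1 hup ⊢
    linarith

omit hf in
include ht in
lemma hl_quad (x y : E) :
    HasGradientAt (fun y' => ‖x - y'‖ ^ 2 / (2 * t)) ((1 / t) • (y - x)) y := by
  rw [hasGradientAt_iff_isLittleO]
  have hfun : (fun y' => ‖x - y'‖ ^ 2 / (2 * t) - ‖x - y‖ ^ 2 / (2 * t)
      - ⟪(1 / t) • (y - x), y' - y⟫) = fun y' => ‖y' - y‖ ^ 2 / (2 * t) := by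
    funext y'
    have h1 : x - y' = (x - y) - (y' - y) := by abel
    rw [h1, norm_sub_sq_real, real_inner_smul_left]
    have h2 : (⟪y - x, y' - y⟫ : ℝ) = -⟪x - y, y' - y⟫ := by
      rw [← inner_neg_left]
      congr 1
      abel
    rw [h2]
    field_simp
    ring
  rw [hfun, Asymptotics.isLittleO_iff]
  intro c hc
  filter_upwards [Metric.ball_mem_nhds y (by positivity : (0:ℝ) < 2 * t * c)] with y' hy'
  rw [Metric.mem_ball, dist_eq_norm] at hy'
  rw [Real.norm_eq_abs, abs_of_nonneg (by positivity)]
  rw [div_le_iff₀ (by linarith)]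
  nlinarith [norm_nonneg (y' - y)]

include ht in
lemma hl_foc (x ystar : E)
    (hmin : ∀ z, f ystar + ‖x - ystar‖ ^ 2 / (2 * t) ≤ f z + ‖x - z‖ ^ 2 / (2 * t))
    (hdiff : DifferentiableAt ℝ f ystar) :
    gradient f ystar = (1 / t) • (x - ystar) := by
  have hfg : HasGradientAt f (gradient f ystar) ystar := hdiff.hasGradientAt
  have hq : HasGradientAt (fun y' => ‖x - y'‖ ^ 2 / (2 * t)) ((1 / t) • (ystar - x)) ystar :=
    hl_quad ht x ystar
  have hsum : HasFDerivAt (fun y => f y + ‖x - y‖ ^ 2 / (2 * t))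
      (toDual ℝ E (gradient f ystar + (1 / t) • (ystar - x))) ystar := by
    rw [map_add]
    exact (hasGradientAt_iff_hasFDerivAt.mp hfg).add (hasGradientAt_iff_hasFDerivAt.mp hq)
  have hloc : IsLocalMin (fun y => f y + ‖x - y‖ ^ 2 / (2 * t)) ystar :=
    Filter.Eventually.of_forall fun z => hmin z
  have hzero := hloc.hasFDerivAt_eq_zero hsum
  have h0 : gradient f ystar + (1 / t) • (ystar - x) = 0 :=
    (LinearIsometryEquiv.map_eq_zero_iff _).mp hzero
  have : (1 / t) • (x - ystar) = -((1 / t) • (ystar - x)) := by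
    rw [← smul_neg]
    congr 1
    abel
  rw [this]
  linear_combination (norm := module) h0
end hl3

/-- Hopf–Lax / proximal point: the infimum in the inf-convolution is attained; if the
minimizer `y*` is unique then the Hopf–Lax function is differentiable at `x` with
gradient `(x - y*)/t`, and if moreover `f` is differentiable at `y*` then
`∇f(y*) = (x - y*)/t`. -/
theorem stmt_4 (n : ℕ) (hn : 1 ≤ n) (t : ℝ) (ht : 0 < t)
    (f : EuclideanSpace ℝ (Fin n) → ℝ) (hf : Continuous f)
    (hfb : ∃ M, ∀ x, |f x| ≤ M) (x : EuclideanSpace ℝ (Fin n)) :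
    (∃ y, ∀ z, f y + ‖x - y‖ ^ 2 / (2 * t) ≤ f z + ‖x - z‖ ^ 2 / (2 * t)) ∧
    (∀ ystar,
      (∀ z, f ystar + ‖x - ystar‖ ^ 2 / (2 * t) ≤ f z + ‖x - z‖ ^ 2 / (2 * t)) →
      (∀ y', (∀ z, f y' + ‖x - y'‖ ^ 2 / (2 * t) ≤ f z + ‖x - z‖ ^ 2 / (2 * t)) →
        y' = ystar) →
      HasGradientAt (fun x' => ⨅ y, (f y + ‖x' - y‖ ^ 2 / (2 * t)))
        ((1 / t) • (x - ystar)) x ∧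
      (DifferentiableAt ℝ f ystar → gradient f ystar = (1 / t) • (x - ystar))) := by
  obtain ⟨M, hM⟩ := hfb
  exact ⟨hl_exists ht hf hM x, fun ystar hmin huniq =>
    ⟨hl_grad ht hf hM x ystar hmin huniq, fun hd => hl_foc ht x ystar hmin hd⟩⟩
end

section
/- Let n ≥ 1, β > 0, T > 0, and let u : ℝⁿ × [0,T] → ℝ be a smooth solution of the viscous Hamilton–Jacobi equation ∂u/∂t = −(1/2)‖∇u‖² + (β⁻¹/2)Δu, such that ∇u and all spatial derivatives of u up to fourth order are bounded on ℝⁿ × [0,T]. Fix k ∈ {1,…,n} and suppose C_k > 0 satisfies ∂²u/∂x_k²(x,0) ≤ C_k for all x ∈ ℝⁿ. Then ∂²u/∂x_k²(x,t) ≤ 1/(C_k⁻¹ + t) for all x ∈ ℝⁿ and all t ∈ [0,T]. -/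
open Real

/-- The spatial Laplacian: sum of second derivatives along coordinate directions. -/
noncomputable def laplacian {n : ℕ} (f : EuclideanSpace ℝ (Fin n) → ℝ)
    (x : EuclideanSpace ℝ (Fin n)) : ℝ :=
  ∑ i : Fin n, fderiv ℝ (fun y => fderiv ℝ f y (EuclideanSpace.single i 1)) x
    (EuclideanSpace.single i 1)

/-- The second derivative of `f` in the `k`-th coordinate direction. -/
noncomputable def secondDerivCoord {n : ℕ} (f : EuclideanSpace ℝ (Fin n) → ℝ)
    (x : EuclideanSpace ℝ (Fin n)) (k : Fin n) : ℝ :=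
  fderiv ℝ (fun y => fderiv ℝ f y (EuclideanSpace.single k 1)) x
    (EuclideanSpace.single k 1)

open scoped ContDiff
open Set Topology Filter


lemma inf_add_one_le : (∞ : WithTop ℕ∞) + 1 ≤ ∞ := by simp
lemma one_le_inf : (1 : WithTop ℕ∞) ≤ ∞ := by
  have : ((1:ℕ∞) : WithTop ℕ∞) ≤ ((⊤:ℕ∞) : WithTop ℕ∞) := WithTop.coe_le_coe.2 le_top
  simpa using this
lemma two_le_inf : (2 : WithTop ℕ∞) ≤ ∞ := by
  have : ((2:ℕ∞) : WithTop ℕ∞) ≤ ((⊤:ℕ∞) : WithTop ℕ∞) := WithTop.coe_le_coe.2 le_top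
  simpa using this

noncomputable def dd {n : ℕ} (i : Fin n) (g : EuclideanSpace ℝ (Fin n) → ℝ)
    (x : EuclideanSpace ℝ (Fin n)) : ℝ :=
  fderiv ℝ g x (EuclideanSpace.single i 1)

lemma dd_contDiff {n : ℕ} (i : Fin n) {g : EuclideanSpace ℝ (Fin n) → ℝ}
    (hg : ContDiff ℝ ∞ g) : ContDiff ℝ ∞ (dd i g) :=
  (hg.fderiv_right (m := ∞) inf_add_one_le).clm_apply contDiff_const

lemma dd_differentiable {n : ℕ} (i : Fin n) {g : EuclideanSpace ℝ (Fin n) → ℝ}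
    (hg : ContDiff ℝ ∞ g) : Differentiable ℝ (dd i g) :=
  (dd_contDiff i hg).differentiable (by simp)

lemma dd_swap {n : ℕ} {g : EuclideanSpace ℝ (Fin n) → ℝ} (hg : ContDiff ℝ ∞ g)
    (a b : Fin n) : dd a (dd b g) = dd b (dd a g) := by
  funext x
  have hdg : ∀ y, DifferentiableAt ℝ (fderiv ℝ g) y := fun y =>
    ((hg.fderiv_right (m := ∞) inf_add_one_le).differentiable (by simp)).differentiableAt
  have hsym : IsSymmSndFDerivAt ℝ g x :=
    (hg.contDiffAt).isSymmSndFDerivAt (by simpa using two_le_inf)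
  have key : ∀ v w : EuclideanSpace ℝ (Fin n),
      fderiv ℝ (fun y => fderiv ℝ g y w) x v = fderiv ℝ (fderiv ℝ g) x v w := by
    intro v w
    rw [fderiv_clm_apply (hdg x) (differentiableAt_const w)]
    simp
  show fderiv ℝ (fun y => fderiv ℝ g y (EuclideanSpace.single b 1)) x (EuclideanSpace.single a 1)
      = fderiv ℝ (fun y => fderiv ℝ g y (EuclideanSpace.single a 1)) x (EuclideanSpace.single b 1)
  rw [key, key, hsym.eq]

lemma gradient_normsq {n : ℕ} (g : EuclideanSpace ℝ (Fin n) → ℝ)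
    (x : EuclideanSpace ℝ (Fin n)) :
    ‖gradient g x‖ ^ 2 = ∑ i : Fin n, (dd i g x) ^ 2 := by
  have hcoord : ∀ i : Fin n, gradient g x i = dd i g x := by
    intro i
    have h1 : fderiv ℝ g x (EuclideanSpace.single i 1)
        = inner ℝ (gradient g x) (EuclideanSpace.single i (1:ℝ)) := by
      rw [gradient, ← InnerProductSpace.toDual_apply_apply,
        LinearIsometryEquiv.apply_symm_apply]
    rw [EuclideanSpace.inner_single_right] at h1
    simp only [map_one, one_mul, RCLike.star_def, starRingEnd_apply, star_trivial] at h1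
    rw [dd, h1]
  rw [EuclideanSpace.norm_eq, Real.sq_sqrt (by positivity)]
  exact Finset.sum_congr rfl fun i _ => by rw [hcoord]; simp [sq_abs]

/-- Second derivative test at a global max at `0`. -/
lemma secondDerivTest {h h' : ℝ → ℝ} {c : ℝ}
    (hd : ∀ s, HasDerivAt h (h' s) s) (hd2 : HasDerivAt h' c 0)
    (hmax : ∀ s, h s ≤ h 0) : h' 0 = 0 ∧ c ≤ 0 := by
  have hmax' : IsLocalMax h 0 := Filter.Eventually.of_forall hmax
  have h0 : h' 0 = 0 := by
    have := hmax'.deriv_eq_zero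
    rwa [(hd 0).deriv] at this
  refine ⟨h0, ?_⟩
  by_contra hc
  push_neg at hc
  have hslope : Filter.Tendsto (slope h' 0) (nhdsWithin 0 {0}ᶜ) (nhds c) :=
    hasDerivAt_iff_tendsto_slope.1 hd2
  have hev : ∀ᶠ s in nhdsWithin (0:ℝ) (Ioi 0), 0 < slope h' 0 s := by
    have : ∀ᶠ s in nhdsWithin (0:ℝ) {0}ᶜ, 0 < slope h' 0 s :=
      hslope (Ioi_mem_nhds hc)
    exact nhdsWithin_mono _ (fun s hs => by simp [ne_of_gt (show (0:ℝ) < s from hs)]) this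
  obtain ⟨δ, hδ, hsub⟩ := mem_nhdsGT_iff_exists_Ioo_subset.1 hev
  have hδ' : (0:ℝ) < δ := hδ
  have hpos : ∀ s ∈ Ioo (0:ℝ) δ, 0 < h' s := by
    intro s hs
    have h1 : 0 < slope h' 0 s := hsub hs
    rw [slope_def_field, h0, sub_zero, sub_zero] at h1
    have hs0 : 0 < s := hs.1
    have := mul_pos h1 hs0
    rwa [div_mul_cancel₀ _ (ne_of_gt hs0)] at this
  have hmono : StrictMonoOn h (Icc 0 δ) := by
    apply strictMonoOn_of_deriv_pos (convex_Icc 0 δ)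
    · exact fun s _ => ((hd s).differentiableAt).continuousAt.continuousWithinAt
    · intro s hs
      rw [interior_Icc] at hs
      rw [(hd s).deriv]
      exact hpos s hs
  have : h 0 < h (δ/2) :=
    hmono ⟨le_refl 0, le_of_lt hδ'⟩ ⟨by positivity, by linarith⟩ (by positivity)
  exact absurd (hmax (δ/2)) (not_le.2 this)

/-- Derivative facts for `s ↦ √(a + (b+s)²)`, `a ≥ 1`. -/
lemma penalty1D {a b : ℝ} (ha : 1 ≤ a) :
    ∃ c : ℝ, (∀ s, HasDerivAt (fun s => Real.sqrt (a + (b+s)^2))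
        ((b+s) / Real.sqrt (a + (b+s)^2)) s)
      ∧ HasDerivAt (fun s => (b+s) / Real.sqrt (a + (b+s)^2)) c 0
      ∧ c ≤ 1 ∧ |b / Real.sqrt (a + b^2)| ≤ 1 := by
  have hqpos : ∀ s : ℝ, 0 < a + (b+s)^2 := fun s => by nlinarith [sq_nonneg (b+s)]
  have hq : ∀ s : ℝ, HasDerivAt (fun s : ℝ => a + (b+s)^2) (2*(b+s)) s := by
    intro s
    have h1 : HasDerivAt (fun s : ℝ => b + s) 1 s := (hasDerivAt_id s).const_add b
    have h2 := (h1.pow 2)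
    simpa using h2.const_add a
  have hsq : ∀ s : ℝ, 0 < Real.sqrt (a + (b+s)^2) := fun s => Real.sqrt_pos.2 (hqpos s)
  have hG : ∀ s, HasDerivAt (fun s => Real.sqrt (a + (b+s)^2))
      ((b+s) / Real.sqrt (a + (b+s)^2)) s := by
    intro s
    have := (hq s).sqrt (ne_of_gt (hqpos s))
    convert this using 1
    field_simp
  have hnum : HasDerivAt (fun s : ℝ => b + s) 1 0 := (hasDerivAt_id 0).const_add b
  have hG' := hnum.div (hG 0) (ne_of_gt (hsq 0))
  simp only [add_zero] at hG'
  set r := Real.sqrt (a + b^2) with hr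
  have hrpos : 0 < r := by
    rw [hr]; apply Real.sqrt_pos.2; nlinarith [sq_nonneg b]
  have hrsq : r^2 = a + b^2 := by
    rw [hr, Real.sq_sqrt]; nlinarith [sq_nonneg b]
  have hrge : 1 ≤ r := by nlinarith
  refine ⟨_, hG, hG', ?_, ?_⟩
  · -- c ≤ 1
    have key : (1 * r - b * (b / r)) / r ^ 2 = a / r^3 := by
      field_simp
      linear_combination hrsq
    rw [key, div_le_one (by positivity)]
    nlinarith
  · rw [abs_div, div_le_one (by positivity)]
    have : b^2 ≤ a + b^2 := by linarith
    calc |b| = Real.sqrt (b^2) := (Real.sqrt_sq_eq_abs b).symm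
    _ ≤ r := Real.sqrt_le_sqrt this
    _ = |r| := (abs_of_nonneg (le_of_lt hrpos)).symm







noncomputable def phi {n : ℕ} (x : EuclideanSpace ℝ (Fin n)) : ℝ :=
  Real.sqrt (1 + ∑ j : Fin n, (x j)^2)

lemma phi_continuous {n : ℕ} : Continuous (phi (n := n)) := by
  apply Real.continuous_sqrt.comp
  apply Continuous.add continuous_const
  exact continuous_finset_sum _ fun j _ =>
    ((continuous_apply j).comp (PiLp.continuous_ofLp 2 _)).pow 2

lemma phi_ge_one {n : ℕ} (x : EuclideanSpace ℝ (Fin n)) : 1 ≤ phi x := by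
  rw [phi]
  rw [show (1:ℝ) = Real.sqrt 1 by simp]
  apply Real.sqrt_le_sqrt
  have : (0:ℝ) ≤ ∑ j : Fin n, (x j)^2 := by positivity
  simp only [Real.sqrt_one]
  linarith

lemma norm_le_phi {n : ℕ} (x : EuclideanSpace ℝ (Fin n)) : ‖x‖ ≤ phi x := by
  rw [phi, EuclideanSpace.norm_eq]
  apply Real.sqrt_le_sqrt
  have : ∀ j : Fin n, ‖x j‖^2 = (x j)^2 := fun j => by rw [Real.norm_eq_abs, sq_abs]
  rw [Finset.sum_congr rfl fun j _ => this j]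
  linarith

lemma phi_line {n : ℕ} (x : EuclideanSpace ℝ (Fin n)) (i : Fin n) (s : ℝ) :
    phi (x + s • EuclideanSpace.single i 1)
      = Real.sqrt ((1 + ∑ j ∈ Finset.univ.erase i, (x j)^2) + (x i + s)^2) := by
  rw [phi]
  congr 1
  have happ : ∀ j, (x + s • EuclideanSpace.single i (1:ℝ)) j
      = x j + s * (if j = i then 1 else 0) := by
    intro j
    simp [EuclideanSpace.single_apply]
  rw [Finset.sum_congr rfl fun j _ => by rw [happ j]]
  rw [← Finset.sum_erase_add _ _ (Finset.mem_univ i)]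
  have h1 : ∀ j ∈ Finset.univ.erase i,
      (x j + s * (if j = i then 1 else 0))^2 = (x j)^2 := by
    intro j hj
    rw [if_neg (Finset.mem_erase.1 hj).1]
    ring
  rw [Finset.sum_congr rfl h1]
  rw [if_pos rfl]
  ring

/-- At a global max of `W - ε·φ`, first derivatives are small and pure second
derivatives are bounded by `ε`. -/
lemma max_point_derivs {n : ℕ} {W : EuclideanSpace ℝ (Fin n) → ℝ}
    (hW : ContDiff ℝ ∞ W) {z : EuclideanSpace ℝ (Fin n)} {ε : ℝ} (hε : 0 < ε)
    (hmax : ∀ y, W y - ε * phi y ≤ W z - ε * phi z) (i : Fin n) :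
    |dd i W z| ≤ ε ∧ dd i (dd i W) z ≤ ε := by
  set v := EuclideanSpace.single i (1:ℝ) with hv
  set ℓ : ℝ → EuclideanSpace ℝ (Fin n) := fun s => z + s • v with hℓdef
  have hℓ0 : ℓ 0 = z := by simp [hℓdef]
  have hℓ : ∀ s, HasDerivAt ℓ v s := by
    intro s
    have := ((hasDerivAt_id s).smul_const v).const_add z
    exact this.congr_deriv (by simp)
  have h1 : ∀ s, HasDerivAt (fun s => W (ℓ s)) (dd i W (ℓ s)) s := by
    intro s
    exact ((hW.differentiable (by simp) (ℓ s)).hasFDerivAt).comp_hasDerivAt s (hℓ s)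
  have h2 : HasDerivAt (fun s => dd i W (ℓ s)) (dd i (dd i W) z) 0 := by
    have := (((dd_contDiff i hW).differentiable (by simp) (ℓ 0)).hasFDerivAt).comp_hasDerivAt
      0 (hℓ 0)
    rwa [hℓ0] at this
  set a : ℝ := 1 + ∑ j ∈ Finset.univ.erase i, (z j)^2 with ha_def
  have ha : 1 ≤ a := by
    have : (0:ℝ) ≤ ∑ j ∈ Finset.univ.erase i, (z j)^2 := by positivity
    rw [ha_def]; linarith
  set b : ℝ := z i with hb_def
  have hφl : ∀ s, phi (ℓ s) = Real.sqrt (a + (b + s)^2) := by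
    intro s
    rw [hℓdef]
    exact phi_line z i s
  obtain ⟨c, hGd, hG'd, hc1, hb1⟩ := penalty1D (b := b) ha
  have hd : ∀ s, HasDerivAt (fun s => W (ℓ s) - ε * phi (ℓ s))
      (dd i W (ℓ s) - ε * ((b+s) / Real.sqrt (a + (b+s)^2))) s := by
    intro s
    have heq : (fun s => W (ℓ s) - ε * phi (ℓ s))
        = fun s => W (ℓ s) - ε * Real.sqrt (a + (b+s)^2) := by
      funext s'; rw [hφl s']
    rw [heq]
    exact (h1 s).sub ((hGd s).const_mul ε)
  have hd2 : HasDerivAt (fun s => dd i W (ℓ s) - ε * ((b+s) / Real.sqrt (a + (b+s)^2)))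
      (dd i (dd i W) z - ε * c) 0 := h2.sub (hG'd.const_mul ε)
  have hmax0 : ∀ s, W (ℓ s) - ε * phi (ℓ s) ≤ W (ℓ 0) - ε * phi (ℓ 0) := by
    intro s; rw [hℓ0]; exact hmax (ℓ s)
  obtain ⟨hfirst, hsecond⟩ := secondDerivTest hd hd2 hmax0
  constructor
  · rw [hℓ0] at hfirst
    have : dd i W z = ε * (b / Real.sqrt (a + b^2)) := by
      have hb0 : b + (0:ℝ) = b := add_zero b
      rw [hb0] at hfirst
      linarith
    rw [this, abs_mul, abs_of_pos hε]
    calc ε * |b / Real.sqrt (a + b^2)| ≤ ε * 1 := by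
          exact mul_le_mul_of_nonneg_left hb1 (le_of_lt hε)
    _ = ε := mul_one ε
  · calc dd i (dd i W) z ≤ ε * c := by linarith
    _ ≤ ε * 1 := mul_le_mul_of_nonneg_left hc1 (le_of_lt hε)
    _ = ε := mul_one ε






lemma dd_differentiableAt {n : ℕ} (i : Fin n) {g : EuclideanSpace ℝ (Fin n) → ℝ}
    (hg : ContDiff ℝ ∞ g) (x : EuclideanSpace ℝ (Fin n)) :
    DifferentiableAt ℝ (dd i g) x :=
  ((dd_contDiff i hg).differentiable (by simp)).differentiableAt

/-- The key pointwise inequality obtained by differentiating the PDE's right-hand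
side twice in the k-th direction. -/
lemma claimB {n : ℕ} {g : EuclideanSpace ℝ (Fin n) → ℝ} (hg : ContDiff ℝ ∞ g)
    (c : ℝ) (k : Fin n) (x : EuclideanSpace ℝ (Fin n)) :
    dd k (dd k (fun y => -(1/2) * (∑ i : Fin n, dd i g y * dd i g y)
        + c * (∑ i : Fin n, dd i (dd i g) y))) x
    ≤ -(dd k (dd k g) x * dd k (dd k g) x)
      - (∑ i : Fin n, dd i g x * dd i (dd k (dd k g)) x)
      + c * (∑ i : Fin n, dd i (dd i (dd k (dd k g))) x) := by
  -- first derivative of R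
  have hdA : ∀ (i : Fin n) y, HasFDerivAt (dd i g) (fderiv ℝ (dd i g) y) y :=
    fun i y => (dd_differentiableAt i hg y).hasFDerivAt
  have hdB : ∀ (i j : Fin n) y, HasFDerivAt (dd i (dd j g)) (fderiv ℝ (dd i (dd j g)) y) y :=
    fun i j y => (dd_differentiableAt i (dd_contDiff j hg) y).hasFDerivAt
  have hdC : ∀ (i j l : Fin n) y, HasFDerivAt (dd i (dd j (dd l g)))
      (fderiv ℝ (dd i (dd j (dd l g))) y) y :=
    fun i j l y => (dd_differentiableAt i (dd_contDiff j (dd_contDiff l hg)) y).hasFDerivAt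
  have step1 : dd k (fun y => -(1/2) * (∑ i : Fin n, dd i g y * dd i g y)
        + c * (∑ i : Fin n, dd i (dd i g) y))
      = fun y => -(1/2) * (∑ i : Fin n, (dd i g y * dd k (dd i g) y
          + dd i g y * dd k (dd i g) y))
        + c * (∑ i : Fin n, dd k (dd i (dd i g)) y) := by
    funext y
    have h1 : HasFDerivAt (fun y => ∑ i : Fin n, dd i g y * dd i g y)
        (∑ i : Fin n, (dd i g y • fderiv ℝ (dd i g) y + dd i g y • fderiv ℝ (dd i g) y)) y :=
      HasFDerivAt.fun_sum fun i _ => (hdA i y).mul (hdA i y)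
    have h2 : HasFDerivAt (fun y => ∑ i : Fin n, dd i (dd i g) y)
        (∑ i : Fin n, fderiv ℝ (dd i (dd i g)) y) y :=
      HasFDerivAt.fun_sum fun i _ => hdB i i y
    have h3 := (h1.const_mul (-(1/2):ℝ)).fun_add (h2.const_mul c)
    rw [dd, h3.fderiv]
    simp [ContinuousLinearMap.sum_apply, smul_eq_mul]
    rfl
  rw [step1]
  have ddfold : ∀ (h : EuclideanSpace ℝ (Fin n) → ℝ) (y : EuclideanSpace ℝ (Fin n)),
      (fderiv ℝ h y) (EuclideanSpace.single k 1) = dd k h y := fun _ _ => rfl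
  -- second derivative
  have h1 : ∀ i : Fin n, HasFDerivAt (fun y => dd i g y * dd k (dd i g) y)
      (dd i g x • fderiv ℝ (dd k (dd i g)) x + dd k (dd i g) x • fderiv ℝ (dd i g) x) x :=
    fun i => (hdA i x).mul (hdB k i x)
  have h2 : HasFDerivAt (fun y => ∑ i : Fin n, (dd i g y * dd k (dd i g) y
      + dd i g y * dd k (dd i g) y))
      (∑ i : Fin n, ((dd i g x • fderiv ℝ (dd k (dd i g)) x
          + dd k (dd i g) x • fderiv ℝ (dd i g) x)
        + (dd i g x • fderiv ℝ (dd k (dd i g)) x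
          + dd k (dd i g) x • fderiv ℝ (dd i g) x))) x :=
    HasFDerivAt.fun_sum fun i _ => (h1 i).fun_add (h1 i)
  have h3 : HasFDerivAt (fun y => ∑ i : Fin n, dd k (dd i (dd i g)) y)
      (∑ i : Fin n, fderiv ℝ (dd k (dd i (dd i g))) x) x :=
    HasFDerivAt.fun_sum fun i _ => hdC k i i x
  have h4 := (h2.const_mul (-(1/2):ℝ)).fun_add (h3.const_mul c)
  have hval : dd k (fun y => -(1/2) * (∑ i : Fin n, (dd i g y * dd k (dd i g) y
        + dd i g y * dd k (dd i g) y))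
      + c * (∑ i : Fin n, dd k (dd i (dd i g)) y)) x
      = -(1/2) * (∑ i : Fin n,
          ((dd i g x * dd k (dd k (dd i g)) x + dd k (dd i g) x * dd k (dd i g) x)
          + (dd i g x * dd k (dd k (dd i g)) x + dd k (dd i g) x * dd k (dd i g) x)))
        + c * (∑ i : Fin n, dd k (dd k (dd i (dd i g))) x) := by
    rw [dd, h4.fderiv]
    simp only [ContinuousLinearMap.add_apply, ContinuousLinearMap.coe_smul',
      Pi.smul_apply, ContinuousLinearMap.smul_apply, ContinuousLinearMap.sum_apply,
      smul_eq_mul, ddfold]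
  rw [hval]
  -- symmetry swaps
  have swap3 : ∀ i : Fin n, dd k (dd k (dd i g)) = dd i (dd k (dd k g)) := by
    intro i
    have e1 : dd k (dd i g) = dd i (dd k g) := dd_swap hg k i
    rw [e1]
    exact dd_swap (dd_contDiff k hg) k i
  have swap4 : ∀ i : Fin n, dd k (dd k (dd i (dd i g))) = dd i (dd i (dd k (dd k g))) := by
    intro i
    have e1 : dd k (dd i (dd i g)) = dd i (dd i (dd k g)) := by
      have e1a : dd k (dd i (dd i g)) = dd i (dd k (dd i g)) := dd_swap (dd_contDiff i hg) k i
      have e1b : dd k (dd i g) = dd i (dd k g) := dd_swap hg k i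
      rw [e1a, e1b]
    rw [e1]
    have e2 : dd k (dd i (dd i (dd k g))) = dd i (dd k (dd i (dd k g))) :=
      dd_swap (dd_contDiff i (dd_contDiff k hg)) k i
    have e3 : dd k (dd i (dd k g)) = dd i (dd k (dd k g)) := dd_swap (dd_contDiff k hg) k i
    rw [e2, e3]
  have hsum4 : (∑ i : Fin n, dd k (dd k (dd i (dd i g))) x)
      = ∑ i : Fin n, dd i (dd i (dd k (dd k g))) x :=
    Finset.sum_congr rfl fun i _ => by rw [swap4 i]
  rw [hsum4]
  have hsum : (∑ i : Fin n,
        ((dd i g x * dd k (dd k (dd i g)) x + dd k (dd i g) x * dd k (dd i g) x)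
        + (dd i g x * dd k (dd k (dd i g)) x + dd k (dd i g) x * dd k (dd i g) x)))
      = 2 * (∑ i : Fin n, dd k (dd i g) x * dd k (dd i g) x)
        + 2 * (∑ i : Fin n, dd i g x * dd i (dd k (dd k g)) x) := by
    rw [Finset.mul_sum, Finset.mul_sum, ← Finset.sum_add_distrib]
    refine Finset.sum_congr rfl fun i _ => ?_
    rw [show dd k (dd k (dd i g)) x = dd i (dd k (dd k g)) x from congrFun (swap3 i) x]
    ring
  rw [hsum]
  have hdrop : dd k (dd k g) x * dd k (dd k g) x
      ≤ ∑ i : Fin n, dd k (dd i g) x * dd k (dd i g) x :=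
    Finset.single_le_sum (f := fun i : Fin n => dd k (dd i g) x * dd k (dd i g) x)
      (fun i _ => mul_self_nonneg _) (Finset.mem_univ k)
  nlinarith [hdrop]





/-- Slice spatial derivative equals joint within-derivative in a spatial direction. -/
lemma slice_fderiv {n : ℕ} {T t : ℝ} (ht : t ∈ Icc (0:ℝ) T)
    {Ψ : EuclideanSpace ℝ (Fin n) × ℝ → ℝ} {x : EuclideanSpace ℝ (Fin n)}
    (hΨ : DifferentiableWithinAt ℝ Ψ ((univ : Set (EuclideanSpace ℝ (Fin n))) ×ˢ Icc 0 T) (x, t))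
    (v : EuclideanSpace ℝ (Fin n)) :
    fderiv ℝ (fun y => Ψ (y, t)) x v
      = fderivWithin ℝ Ψ ((univ : Set (EuclideanSpace ℝ (Fin n))) ×ˢ Icc 0 T) (x, t) (v, 0) := by
  set S := (univ : Set (EuclideanSpace ℝ (Fin n))) ×ˢ Icc (0:ℝ) T with hSdef
  have hmap : MapsTo (fun y : EuclideanSpace ℝ (Fin n) => (y, t)) univ S :=
    fun y _ => ⟨trivial, ht⟩
  have hj : HasFDerivAt (fun y : EuclideanSpace ℝ (Fin n) => (y, t))
      ((ContinuousLinearMap.id ℝ (EuclideanSpace ℝ (Fin n))).prod 0) x :=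
    (hasFDerivAt_id x).prodMk (hasFDerivAt_const t x)
  have hcomp : HasFDerivWithinAt (fun y => Ψ (y, t))
      ((fderivWithin ℝ Ψ S (x, t)).comp
        ((ContinuousLinearMap.id ℝ (EuclideanSpace ℝ (Fin n))).prod 0)) univ x :=
    HasFDerivWithinAt.comp x hΨ.hasFDerivWithinAt (hj.hasFDerivWithinAt) hmap
  rw [hasFDerivWithinAt_univ] at hcomp
  rw [hcomp.fderiv]
  simp

/-- Slice time derivative equals joint within-derivative in the time direction. -/
lemma slice_time {n : ℕ} {T t : ℝ} (ht : t ∈ Icc (0:ℝ) T)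
    {Ψ : EuclideanSpace ℝ (Fin n) × ℝ → ℝ} {x : EuclideanSpace ℝ (Fin n)}
    (hΨ : DifferentiableWithinAt ℝ Ψ ((univ : Set (EuclideanSpace ℝ (Fin n))) ×ˢ Icc 0 T) (x, t)) :
    HasDerivWithinAt (fun s => Ψ (x, s))
      (fderivWithin ℝ Ψ ((univ : Set (EuclideanSpace ℝ (Fin n))) ×ˢ Icc 0 T) (x, t) (0, 1))
      (Icc 0 T) t := by
  have hj : HasDerivAt (fun s : ℝ => ((x : EuclideanSpace ℝ (Fin n)), s)) (0, 1) t :=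
    (hasDerivAt_const t x).prodMk (hasDerivAt_id t)
  have := HasFDerivWithinAt.comp_hasDerivWithinAt t hΨ.hasFDerivWithinAt
    hj.hasDerivWithinAt (fun s hs => ⟨trivial, hs⟩)
  exact this

/-- bound for first directional derivative via iterated derivative norm. -/
lemma abs_dd_le {n : ℕ} {g : EuclideanSpace ℝ (Fin n) → ℝ} {M : ℝ}
    {x : EuclideanSpace ℝ (Fin n)} (i : Fin n)
    (h1 : ‖iteratedFDeriv ℝ 1 g x‖ ≤ M) : |dd i g x| ≤ M := by
  have key : dd i g x = iteratedFDeriv ℝ 1 g x ![EuclideanSpace.single i 1] := by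
    rw [iteratedFDeriv_one_apply]
    rfl
  rw [key, ← Real.norm_eq_abs]
  calc ‖iteratedFDeriv ℝ 1 g x ![EuclideanSpace.single i 1]‖
      ≤ ‖iteratedFDeriv ℝ 1 g x‖ * ∏ j : Fin 1, ‖(![EuclideanSpace.single i 1] : Fin 1 → _) j‖ :=
        ContinuousMultilinearMap.le_opNorm _ _
  _ = ‖iteratedFDeriv ℝ 1 g x‖ := by
        simp [EuclideanSpace.norm_single]
  _ ≤ M := h1

/-- bound for pure second directional derivatives. -/
lemma abs_dd2_le {n : ℕ} {g : EuclideanSpace ℝ (Fin n) → ℝ} {M : ℝ}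
    {x : EuclideanSpace ℝ (Fin n)} (hg : ContDiff ℝ ∞ g) (a b : Fin n)
    (h2 : ‖iteratedFDeriv ℝ 2 g x‖ ≤ M) : |dd a (dd b g) x| ≤ M := by
  have hdg : DifferentiableAt ℝ (fderiv ℝ g) x :=
    ((hg.fderiv_right (m := ∞) (by simp)).differentiable (by simp)).differentiableAt
  have key : dd a (dd b g) x
      = iteratedFDeriv ℝ 2 g x ![EuclideanSpace.single a 1, EuclideanSpace.single b 1] := by
    rw [iteratedFDeriv_two_apply]
    show fderiv ℝ (fun y => fderiv ℝ g y (EuclideanSpace.single b 1)) x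
        (EuclideanSpace.single a 1) = _
    rw [fderiv_clm_apply hdg (differentiableAt_const _)]
    simp
  rw [key, ← Real.norm_eq_abs]
  calc ‖iteratedFDeriv ℝ 2 g x ![EuclideanSpace.single a 1, EuclideanSpace.single b 1]‖
      ≤ ‖iteratedFDeriv ℝ 2 g x‖ * ∏ j : Fin 2,
        ‖(![EuclideanSpace.single a 1, EuclideanSpace.single b 1] : Fin 2 → _) j‖ :=
        ContinuousMultilinearMap.le_opNorm _ _
  _ = ‖iteratedFDeriv ℝ 2 g x‖ := by
        rw [Fin.prod_univ_two]
        simp [EuclideanSpace.norm_single]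
  _ ≤ M := h2

/-- at a maximum from the left, the (one-sided) derivative is nonnegative. -/
lemma deriv_nonneg_of_left_max {h : ℝ → ℝ} {d t₀ t₁ : ℝ} (ht1 : 0 < t₁) (h10 : t₁ ≤ t₀)
    (hd : HasDerivWithinAt h d (Icc 0 t₀) t₁)
    (hmax : ∀ s ∈ Icc (0:ℝ) t₀, h s ≤ h t₁) : 0 ≤ d := by
  have hd' : HasDerivWithinAt h d (Icc 0 t₁) t₁ := hd.mono (Icc_subset_Icc_right h10)
  have hlim := hasDerivWithinAt_iff_tendsto_slope.1 hd'
  haveI hne : (𝓝[Icc (0:ℝ) t₁ \ {t₁}] t₁).NeBot := by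
    apply (right_nhdsWithin_Ioo_neBot ht1).mono
    apply nhdsWithin_mono
    intro z hz
    exact ⟨⟨le_of_lt hz.1, le_of_lt hz.2⟩, ne_of_lt hz.2⟩
  refine ge_of_tendsto hlim ?_
  filter_upwards [self_mem_nhdsWithin] with z hz
  have hz1 : z ∈ Icc (0:ℝ) t₁ := hz.1
  have hzne : z ≠ t₁ := hz.2
  have hzlt : z < t₁ := lt_of_le_of_ne hz1.2 hzne
  have hnum : h z - h t₁ ≤ 0 := by
    have := hmax z ⟨hz1.1, le_trans hz1.2 h10⟩
    linarith
  have hden : z - t₁ < 0 := by linarith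
  rw [slope_def_field]
  rw [div_nonneg_iff]
  right
  constructor <;> linarith


lemma laplacian_eq {n : ℕ} (f : EuclideanSpace ℝ (Fin n) → ℝ) (x : EuclideanSpace ℝ (Fin n)) :
    laplacian f x = ∑ i : Fin n, dd i (dd i f) x := rfl

lemma secondDerivCoord_eq {n : ℕ} (f : EuclideanSpace ℝ (Fin n) → ℝ)
    (x : EuclideanSpace ℝ (Fin n)) (k : Fin n) :
    secondDerivCoord f x k = dd k (dd k f) x := rfl

set_option maxHeartbeats 1000000 in
/-- Semiconcavity estimate for the viscous Hamilton–Jacobi equation: if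
`∂²u/∂x_k²(·,0) ≤ C_k`, then `∂²u/∂x_k²(·,t) ≤ 1/(C_k⁻¹ + t)` for `t ∈ [0,T]`. -/
theorem stmt_9 (n : ℕ) (hn : 1 ≤ n) (β T : ℝ) (hβ : 0 < β) (hT : 0 < T)
    (u : EuclideanSpace ℝ (Fin n) → ℝ → ℝ)
    (hsmooth : ContDiffOn ℝ (⊤ : ℕ∞)
      (fun p : EuclideanSpace ℝ (Fin n) × ℝ => u p.1 p.2)
      (Set.univ ×ˢ Set.Icc 0 T))
    (hbdd : ∃ M, ∀ x, ∀ t ∈ Set.Icc (0 : ℝ) T, ∀ i ≤ 4,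
      ‖iteratedFDeriv ℝ i (fun y => u y t) x‖ ≤ M)
    (hpde : ∀ x, ∀ t ∈ Set.Icc (0 : ℝ) T,
      HasDerivAt (u x)
        (-(1/2) * ‖gradient (fun y => u y t) x‖ ^ 2
          + (β⁻¹ / 2) * laplacian (fun y => u y t) x) t)
    (k : Fin n) (Ck : ℝ) (hCk : 0 < Ck)
    (hinit : ∀ x, secondDerivCoord (fun y => u y 0) x k ≤ Ck) :
    ∀ x, ∀ t ∈ Set.Icc (0 : ℝ) T,
      secondDerivCoord (fun y => u y t) x k ≤ 1 / (Ck⁻¹ + t) := by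
  obtain ⟨M, hM⟩ := hbdd
  set S : Set (EuclideanSpace ℝ (Fin n) × ℝ) := Set.univ ×ˢ Set.Icc 0 T with hSdef
  set U : EuclideanSpace ℝ (Fin n) × ℝ → ℝ := fun p => u p.1 p.2 with hUdef
  have hU : ContDiffOn ℝ ∞ U S := hsmooth.of_le (by simp)
  have hS : UniqueDiffOn ℝ S := uniqueDiffOn_univ.prod (uniqueDiffOn_Icc hT)
  have hclos : closure (interior S) = S := by
    rw [hSdef, interior_prod_eq, interior_univ, interior_Icc, closure_prod_eq,
      closure_univ, closure_Ioo (ne_of_lt hT)]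
  have hfC : ∀ t ∈ Icc (0:ℝ) T, ContDiff ℝ ∞ (fun y => u y t) := by
    intro t ht
    rw [← contDiffOn_univ]
    exact hU.comp ((contDiff_id.prodMk contDiff_const).contDiffOn)
      (fun y _ => ⟨trivial, ht⟩)
  set G1 : Fin n → EuclideanSpace ℝ (Fin n) × ℝ → ℝ :=
    fun i p => fderivWithin ℝ U S p (EuclideanSpace.single i 1, (0:ℝ)) with hG1def
  have hG1smooth : ∀ i, ContDiffOn ℝ ∞ (G1 i) S := fun i =>
    (hU.fderivWithin hS inf_add_one_le).clm_apply contDiffOn_const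
  have hbr1 : ∀ (i : Fin n), ∀ t ∈ Icc (0:ℝ) T, ∀ x,
      dd i (fun y => u y t) x = G1 i (x, t) := by
    intro i t ht x
    exact slice_fderiv ht (hU.differentiableOn (by simp) _ ⟨trivial, ht⟩) _
  set G2 : Fin n → EuclideanSpace ℝ (Fin n) × ℝ → ℝ :=
    fun i p => fderivWithin ℝ (G1 i) S p (EuclideanSpace.single i 1, (0:ℝ)) with hG2def
  have hG2smooth : ∀ i, ContDiffOn ℝ ∞ (G2 i) S := fun i =>
    ((hG1smooth i).fderivWithin hS inf_add_one_le).clm_apply contDiffOn_const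
  have hbr2 : ∀ (i : Fin n), ∀ t ∈ Icc (0:ℝ) T, ∀ x,
      dd i (dd i (fun y => u y t)) x = G2 i (x, t) := by
    intro i t ht x
    have hfun : dd i (fun y => u y t) = fun y => G1 i (y, t) :=
      funext fun y => hbr1 i t ht y
    show fderiv ℝ (dd i (fun y => u y t)) x (EuclideanSpace.single i 1) = _
    rw [hfun]
    exact slice_fderiv ht ((hG1smooth i).differentiableOn (by simp) _ ⟨trivial, ht⟩) _
  have hwkey : ∀ t ∈ Icc (0:ℝ) T, ∀ x,
      secondDerivCoord (fun y => u y t) x k = G2 k (x, t) := by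
    intro t ht x
    rw [secondDerivCoord_eq]
    exact hbr2 k t ht x
  have hM0 : 0 ≤ M :=
    le_trans (norm_nonneg _) (hM 0 0 ⟨le_refl 0, le_of_lt hT⟩ 0 (by norm_num))
  have hMd1 : ∀ t ∈ Icc (0:ℝ) T, ∀ x (i : Fin n), |dd i (fun y => u y t) x| ≤ M :=
    fun t ht x i => abs_dd_le i (hM x t ht 1 (by norm_num))
  have hMd2 : ∀ t ∈ Icc (0:ℝ) T, ∀ x, |G2 k (x, t)| ≤ M := by
    intro t ht x
    rw [← hbr2 k t ht x]
    exact abs_dd2_le (hfC t ht) k k (hM x t ht 2 (by norm_num))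
  set c' : ℝ := β⁻¹ / 2 with hc'def
  have hc'pos : 0 < c' := by rw [hc'def]; positivity
  set Φ : EuclideanSpace ℝ (Fin n) × ℝ → ℝ :=
    fun p => -(1/2) * (∑ i : Fin n, G1 i p * G1 i p) + c' * (∑ i : Fin n, G2 i p) with hΦdef
  have hΦsmooth : ContDiffOn ℝ ∞ Φ S := by
    apply ContDiffOn.add
    · exact contDiffOn_const.mul
        (ContDiffOn.sum fun i _ => (hG1smooth i).mul (hG1smooth i))
    · exact contDiffOn_const.mul (ContDiffOn.sum fun i _ => hG2smooth i)
  have hPDEjoint : ∀ p ∈ S, fderivWithin ℝ U S p ((0:EuclideanSpace ℝ (Fin n)), (1:ℝ)) = Φ p := by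
    rintro ⟨x, t⟩ ⟨-, ht⟩
    have hIccU : UniqueDiffWithinAt ℝ (Icc (0:ℝ) T) t := uniqueDiffOn_Icc hT t ht
    have h1 : HasDerivWithinAt (fun s => U (x, s))
        (fderivWithin ℝ U S (x, t) ((0:EuclideanSpace ℝ (Fin n)), (1:ℝ))) (Icc 0 T) t :=
      slice_time ht (hU.differentiableOn (by simp) _ ⟨trivial, ht⟩)
    have h2 : HasDerivWithinAt (fun s => U (x, s))
        (-(1/2) * ‖gradient (fun y => u y t) x‖ ^ 2
          + (β⁻¹ / 2) * laplacian (fun y => u y t) x) (Icc 0 T) t :=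
      (hpde x t ht).hasDerivWithinAt
    have heq : fderivWithin ℝ U S (x, t) ((0:EuclideanSpace ℝ (Fin n)), (1:ℝ))
        = -(1/2) * ‖gradient (fun y => u y t) x‖ ^ 2
          + (β⁻¹ / 2) * laplacian (fun y => u y t) x := by
      rw [← h1.derivWithin hIccU, h2.derivWithin hIccU]
    rw [heq, hΦdef]
    simp only
    rw [gradient_normsq, laplacian_eq]
    congr 1
    · rw [neg_mul, neg_mul, neg_inj]
      congr 1
      refine Finset.sum_congr rfl fun i _ => ?_
      rw [← hbr1 i t ht x, sq]
    · rw [hc'def]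
      congr 1
      exact Finset.sum_congr rfl fun i _ => hbr2 i t ht x
  -- the time derivative of the second spatial derivative (Claim A)
  have keyswap : ∀ (Ψ : EuclideanSpace ℝ (Fin n) × ℝ → ℝ), ContDiffOn ℝ ∞ Ψ S →
      ∀ p ∈ S, ∀ (v w : EuclideanSpace ℝ (Fin n) × ℝ),
      fderivWithin ℝ (fun q => fderivWithin ℝ Ψ S q v) S p w
        = fderivWithin ℝ (fun q => fderivWithin ℝ Ψ S q w) S p v := by
    intro Ψ hΨ p hp v w
    have hA : DifferentiableWithinAt ℝ (fderivWithin ℝ Ψ S) S p :=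
      ((hΨ.fderivWithin hS inf_add_one_le).differentiableOn (by simp)) p hp
    have hsym : IsSymmSndFDerivWithinAt ℝ Ψ S p :=
      (hΨ p hp).isSymmSndFDerivWithinAt (by simpa using two_le_inf) hS (hclos.symm ▸ hp) hp
    have h1 := fderivWithin_clm_apply (hS p hp) hA (differentiableWithinAt_const v)
    have h2 := fderivWithin_clm_apply (hS p hp) hA (differentiableWithinAt_const w)
    rw [h1, h2, fderivWithin_const_apply, fderivWithin_const_apply]
    simp only [ContinuousLinearMap.comp_zero, zero_add, ContinuousLinearMap.add_apply,
      ContinuousLinearMap.flip_apply]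
    exact hsym.eq w v
  have hq : ∀ x, ∀ t ∈ Icc (0:ℝ) T,
      HasDerivWithinAt (fun s => G2 k (x, s))
        (dd k (dd k (fun y =>
          -(1/2) * (∑ i : Fin n, dd i (fun y' => u y' t) y * dd i (fun y' => u y' t) y)
          + c' * (∑ i : Fin n, dd i (dd i (fun y' => u y' t)) y))) x)
        (Icc 0 T) t := by
    intro x t ht
    have hp : ((x, t) : EuclideanSpace ℝ (Fin n) × ℝ) ∈ S := ⟨trivial, ht⟩
    have hstepa : HasDerivWithinAt (fun s => G2 k (x, s))
        (fderivWithin ℝ (G2 k) S (x, t) ((0:EuclideanSpace ℝ (Fin n)), (1:ℝ)))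
        (Icc 0 T) t :=
      slice_time ht ((hG2smooth k).differentiableOn (by simp) _ hp)
    have e0 : G2 k = fun p => fderivWithin ℝ (G1 k) S p (EuclideanSpace.single k 1, (0:ℝ)) := rfl
    have hstepb : fderivWithin ℝ (G2 k) S (x, t) ((0:EuclideanSpace ℝ (Fin n)), (1:ℝ))
        = fderivWithin ℝ (fun p => fderivWithin ℝ Φ S p (EuclideanSpace.single k 1, (0:ℝ)))
          S (x, t) (EuclideanSpace.single k 1, (0:ℝ)) := by
      rw [e0, keyswap (G1 k) (hG1smooth k) _ hp _ _]
      -- now : fderivWithin (fun q => fderivWithin (G1 k) S q (0,1)) S (x,t) (ek,0)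
      have hinner : EqOn (fun q => fderivWithin ℝ (G1 k) S q ((0:EuclideanSpace ℝ (Fin n)), (1:ℝ)))
          (fun q => fderivWithin ℝ Φ S q (EuclideanSpace.single k 1, (0:ℝ))) S := by
        intro q hqS
        simp only
        have e1 : G1 k = fun q' => fderivWithin ℝ U S q' (EuclideanSpace.single k 1, (0:ℝ)) := rfl
        rw [e1, keyswap U hU _ hqS _ _]
        -- fderivWithin (fun q' => fderivWithin U S q' (0,1)) S q (ek,0) = fderivWithin Φ S q (ek,0)
        have hEq : EqOn (fun q' => fderivWithin ℝ U S q'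
            ((0:EuclideanSpace ℝ (Fin n)), (1:ℝ))) Φ S := fun q' hq' => hPDEjoint q' hq'
        have := fderivWithin_congr (𝕜 := ℝ) hEq (hPDEjoint q hqS)
        rw [this]
      have hpteq : (fun q => fderivWithin ℝ (G1 k) S q ((0:EuclideanSpace ℝ (Fin n)), (1:ℝ))) (x,t)
          = (fun q => fderivWithin ℝ Φ S q (EuclideanSpace.single k 1, (0:ℝ))) (x,t) :=
        hinner hp
      rw [fderivWithin_congr (𝕜 := ℝ) hinner hpteq]
    have hstepc : fderivWithin ℝ
        (fun p => fderivWithin ℝ Φ S p (EuclideanSpace.single k 1, (0:ℝ)))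
          S (x, t) (EuclideanSpace.single k 1, (0:ℝ))
        = dd k (dd k (fun y =>
          -(1/2) * (∑ i : Fin n, dd i (fun y' => u y' t) y * dd i (fun y' => u y' t) y)
          + c' * (∑ i : Fin n, dd i (dd i (fun y' => u y' t)) y))) x := by
      have hΦ1smooth : ContDiffOn ℝ ∞
          (fun p => fderivWithin ℝ Φ S p (EuclideanSpace.single k 1, (0:ℝ))) S :=
        (hΦsmooth.fderivWithin hS inf_add_one_le).clm_apply contDiffOn_const
      have hΦslice : (fun z => Φ (z, t)) = fun y =>
          -(1/2) * (∑ i : Fin n, dd i (fun y' => u y' t) y * dd i (fun y' => u y' t) y)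
          + c' * (∑ i : Fin n, dd i (dd i (fun y' => u y' t)) y) := by
        funext z
        rw [hΦdef]
        simp only
        congr 1
        · congr 1
          exact Finset.sum_congr rfl fun i _ => by rw [← hbr1 i t ht z]
        · congr 1
          exact Finset.sum_congr rfl fun i _ => by rw [← hbr2 i t ht z]
      have hs1 : ∀ y, (fun p => fderivWithin ℝ Φ S p (EuclideanSpace.single k 1, (0:ℝ))) (y, t)
          = dd k (fun y' =>
            -(1/2) * (∑ i : Fin n, dd i (fun y'' => u y'' t) y' * dd i (fun y'' => u y'' t) y')
            + c' * (∑ i : Fin n, dd i (dd i (fun y'' => u y'' t)) y')) y := by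
        intro y
        simp only
        rw [← slice_fderiv ht (hΦsmooth.differentiableOn (by simp) _ ⟨trivial, ht⟩) _]
        show fderiv ℝ (fun z => Φ (z, t)) y (EuclideanSpace.single k 1) = _
        rw [hΦslice]
        rfl
      rw [← slice_fderiv ht (hΦ1smooth.differentiableOn (by simp) _ hp) _]
      show fderiv ℝ (fun y => (fun p => fderivWithin ℝ Φ S p
        (EuclideanSpace.single k 1, (0:ℝ))) (y, t)) x (EuclideanSpace.single k 1) = _
      rw [funext hs1]
      rfl
    rw [hstepb, hstepc] at hstepa
    exact hstepa
  -- main comparison, for each δ > 0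
  have key : ∀ δ : ℝ, 0 < δ → ∀ x, ∀ t ∈ Icc (0:ℝ) T,
      G2 k (x, t) ≤ ((Ck + δ)⁻¹ + t)⁻¹ := by
    intro δ hδ
    by_contra hcon
    push_neg at hcon
    obtain ⟨x₀, t₀, ht₀, hbad⟩ := hcon
    obtain ⟨ht₀0, ht₀T⟩ := ht₀
    have hCkδ : 0 < Ck + δ := by linarith
    set ψ : ℝ → ℝ := fun s => ((Ck + δ)⁻¹ + s)⁻¹ with hψdef
    have hψpos : ∀ s, 0 ≤ s → 0 < ψ s := by
      intro s hs; simp only [hψdef]; positivity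
    have hψd : ∀ s, 0 ≤ s → HasDerivAt ψ (-(ψ s * ψ s)) s := by
      intro s hs
      have hne : (Ck + δ)⁻¹ + s ≠ 0 := by positivity
      have h1 : HasDerivAt (fun r : ℝ => (Ck + δ)⁻¹ + r) 1 s := (hasDerivAt_id s).const_add _
      have h2 : HasDerivAt (fun r : ℝ => ((Ck + δ)⁻¹ + r)⁻¹) _ s := h1.inv hne
      convert h2 using 1
      show -(((Ck + δ)⁻¹ + s)⁻¹ * ((Ck + δ)⁻¹ + s)⁻¹) = _
      rw [neg_div, one_div, ← inv_pow, sq]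
    have hψ0 : ψ 0 = Ck + δ := by simp only [hψdef]; simp
    set κ : ℝ := (G2 k (x₀, t₀) - ψ t₀) / 2 with hκdef
    have hκpos : 0 < κ := by rw [hκdef]; simp only [hψdef] at hbad ⊢; linarith
    set Cst : ℝ := (n : ℝ) * M + c' * (n : ℝ) with hCstdef
    have hCstnn : 0 ≤ Cst := by
      rw [hCstdef]; have := hc'pos; positivity
    have hφ0pos : 0 < phi x₀ := lt_of_lt_of_le one_pos (phi_ge_one x₀)
    set ε : ℝ := min (κ / phi x₀) (κ ^ 2 / (Cst + 1)) with hεdef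
    have hεpos : 0 < ε := by
      rw [hεdef]; apply lt_min <;> positivity
    have hεφ : ε * phi x₀ ≤ κ := by
      have h1 : ε ≤ κ / phi x₀ := min_le_left _ _
      have h2 := mul_le_mul_of_nonneg_right h1 (le_of_lt hφ0pos)
      rwa [div_mul_cancel₀ _ (ne_of_gt hφ0pos)] at h2
    have hεC : Cst * ε < κ ^ 2 := by
      have h1 : ε ≤ κ ^ 2 / (Cst + 1) := min_le_right _ _
      have h2 : Cst * ε ≤ Cst * (κ ^ 2 / (Cst + 1)) := mul_le_mul_of_nonneg_left h1 hCstnn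
      have h3 : Cst * (κ ^ 2 / (Cst + 1)) = κ ^ 2 * (Cst / (Cst + 1)) := by ring
      have h4 : Cst / (Cst + 1) < 1 := (div_lt_one (by linarith)).2 (by linarith)
      have h5 : 0 < κ ^ 2 := pow_pos hκpos 2
      nlinarith
    set R0 : ℝ := (M + 1) / ε + ‖x₀‖ + 1 with hR0def
    set K : Set (EuclideanSpace ℝ (Fin n) × ℝ) :=
      Metric.closedBall (0 : EuclideanSpace ℝ (Fin n)) R0 ×ˢ Icc 0 t₀ with hKdef
    have hKsub : K ⊆ S := by
      rintro ⟨y, s⟩ ⟨-, hs⟩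
      exact ⟨trivial, ⟨hs.1, le_trans hs.2 ht₀T⟩⟩
    have hKcomp : IsCompact K := (isCompact_closedBall _ _).prod isCompact_Icc
    have hx₀K : (x₀, t₀) ∈ K := by
      constructor
      · rw [Metric.mem_closedBall, dist_zero_right, hR0def]
        have : 0 < (M + 1) / ε := by positivity
        linarith
      · exact ⟨ht₀0, le_refl t₀⟩
    set g2 : EuclideanSpace ℝ (Fin n) × ℝ → ℝ :=
      fun p => G2 k p - ψ p.2 - ε * phi p.1 with hg2def
    have hψcont : ContinuousOn ψ (Icc 0 t₀) := by
      simp only [hψdef]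
      apply ContinuousOn.inv₀
      · exact (continuous_const.add continuous_id).continuousOn
      · intro s hs; have := hs.1; positivity
    have hg2cont : ContinuousOn g2 K := by
      apply ContinuousOn.sub
      · apply ContinuousOn.sub
        · exact ((hG2smooth k).continuousOn).mono hKsub
        · exact hψcont.comp continuous_snd.continuousOn (fun p hp => hp.2)
      · exact (continuous_const.mul (phi_continuous.comp continuous_fst)).continuousOn
    obtain ⟨phat, hphatK, hphatmax⟩ := hKcomp.exists_isMaxOn ⟨(x₀, t₀), hx₀K⟩ hg2cont
    have hκle : κ ≤ g2 phat := by
      have h1 : κ ≤ g2 (x₀, t₀) := by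
        simp only [hg2def]
        have : 0 ≤ ε * phi x₀ := by positivity
        rw [hκdef]
        linarith [hεφ]
      exact le_trans h1 (hphatmax hx₀K)
    have hglobal : ∀ y, ∀ s ∈ Icc (0:ℝ) t₀, g2 (y, s) ≤ g2 phat := by
      intro y s hs
      by_cases hy : ‖y‖ ≤ R0
      · refine hphatmax ⟨?_, hs⟩
        rwa [Metric.mem_closedBall, dist_zero_right]
      · push_neg at hy
        have hsT : s ∈ Icc (0:ℝ) T := ⟨hs.1, le_trans hs.2 ht₀T⟩
        have h1 : G2 k (y, s) ≤ M := le_of_abs_le (hMd2 s hsT y)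
        have h2 : 0 < ψ s := hψpos s hs.1
        have h3 : ε * ‖y‖ ≤ ε * phi y :=
          mul_le_mul_of_nonneg_left (norm_le_phi y) (le_of_lt hεpos)
        have h4 : M + 1 < ε * ‖y‖ := by
          have h5 : (M + 1) / ε < ‖y‖ := by
            rw [hR0def] at hy
            have h6 : 0 ≤ ‖x₀‖ := norm_nonneg _
            linarith
          calc M + 1 = ε * ((M + 1) / ε) := by field_simp
          _ < ε * ‖y‖ := mul_lt_mul_of_pos_left h5 hεpos
        have h7 : g2 (y, s) < κ := by
          simp only [hg2def]
          linarith
        linarith [hκle]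
    obtain ⟨xhat, that⟩ := phat
    have hthatmem : that ∈ Icc (0:ℝ) t₀ := hphatK.2
    have hthatT : that ∈ Icc (0:ℝ) T := ⟨hthatmem.1, le_trans hthatmem.2 ht₀T⟩
    have hthatpos : 0 < that := by
      rcases lt_or_eq_of_le hthatmem.1 with h | h
      · exact h
      · exfalso
        have h0mem : (0:ℝ) ∈ Icc (0:ℝ) T := ⟨le_refl 0, le_of_lt hT⟩
        have hG20 : G2 k (xhat, 0) ≤ Ck := by
          rw [← hwkey 0 h0mem xhat]; exact hinit xhat
        have hφ1 : 1 ≤ phi xhat := phi_ge_one xhat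
        have h8 : g2 (xhat, that) < κ := by
          simp only [hg2def]
          rw [← h, hψ0]
          have h9 : ε * 1 ≤ ε * phi xhat := mul_le_mul_of_nonneg_left hφ1 (le_of_lt hεpos)
          linarith
        linarith [hκle]
    -- derivative information at the spatial maximum
    have hWmax : ∀ y, dd k (dd k (fun y' => u y' that)) y - ε * phi y
        ≤ dd k (dd k (fun y' => u y' that)) xhat - ε * phi xhat := by
      intro y
      have h1 := hglobal y that hthatmem
      simp only [hg2def] at h1
      rw [hbr2 k that hthatT y, hbr2 k that hthatT xhat]
      linarith
    have hW : ContDiff ℝ ∞ (dd k (dd k (fun y' => u y' that))) :=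
      dd_contDiff k (dd_contDiff k (hfC that hthatT))
    have hderivs := fun i : Fin n => max_point_derivs hW hεpos hWmax i
    -- time derivative inequality at the maximum point
    have hqd := hq xhat that hthatT
    set qhat : ℝ := dd k (dd k (fun y =>
        -(1/2) * (∑ i : Fin n, dd i (fun y' => u y' that) y * dd i (fun y' => u y' that) y)
          + c' * (∑ i : Fin n, dd i (dd i (fun y' => u y' that)) y))) xhat with hqhatdef
    have hhd : HasDerivWithinAt (fun s => G2 k (xhat, s) - ψ s - ε * phi xhat)
        (qhat - -(ψ that * ψ that)) (Icc 0 T) that :=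
      (hqd.sub ((hψd that hthatmem.1).hasDerivWithinAt)).sub_const _
    have hmaxt : ∀ s ∈ Icc (0:ℝ) t₀,
        G2 k (xhat, s) - ψ s - ε * phi xhat ≤ G2 k (xhat, that) - ψ that - ε * phi xhat := by
      intro s hs
      have := hglobal xhat s hs
      simp only [hg2def] at this
      linarith
    have hdnn : 0 ≤ qhat + ψ that * ψ that := by
      have := deriv_nonneg_of_left_max hthatpos hthatmem.2
        (hhd.mono (Icc_subset_Icc_right ht₀T)) hmaxt
      linarith
    -- claim B bound
    have hB : qhat ≤ -(dd k (dd k (fun y' => u y' that)) xhat * dd k (dd k (fun y' => u y' that)) xhat)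
        - (∑ i : Fin n, dd i (fun y' => u y' that) xhat * dd i (dd k (dd k (fun y' => u y' that))) xhat)
        + c' * (∑ i : Fin n, dd i (dd i (dd k (dd k (fun y' => u y' that)))) xhat) :=
      claimB (hfC that hthatT) c' k xhat
    -- bound the error terms
    have hsum1 : -(∑ i : Fin n, dd i (fun y' => u y' that) xhat
            * dd i (dd k (dd k (fun y' => u y' that))) xhat)
        ≤ (n : ℝ) * M * ε := by
      have hterm : ∀ i : Fin n, -(M * ε) ≤ dd i (fun y' => u y' that) xhat
          * dd i (dd k (dd k (fun y' => u y' that))) xhat := by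
        intro i
        have h1 := hMd1 that hthatT xhat i
        have h2 := (hderivs i).1
        have habs : |dd i (fun y' => u y' that) xhat
            * dd i (dd k (dd k (fun y' => u y' that))) xhat| ≤ M * ε := by
          rw [abs_mul]
          exact mul_le_mul h1 h2 (abs_nonneg _) hM0
        linarith [(abs_le.1 habs).1]
      have hsum := Finset.sum_le_sum (fun i (_ : i ∈ Finset.univ) => hterm i)
      rw [Finset.sum_const, Finset.card_univ, Fintype.card_fin, nsmul_eq_mul] at hsum
      linarith
    have hsum2 : c' * (∑ i : Fin n, dd i (dd i (dd k (dd k (fun y' => u y' that)))) xhat)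
        ≤ c' * ((n : ℝ) * ε) := by
      apply mul_le_mul_of_nonneg_left _ (le_of_lt hc'pos)
      have hsum := Finset.sum_le_sum (fun i (_ : i ∈ Finset.univ) => (hderivs i).2)
      rw [Finset.sum_const, Finset.card_univ, Fintype.card_fin, nsmul_eq_mul] at hsum
      linarith
    have hWval : ψ that + κ ≤ dd k (dd k (fun y' => u y' that)) xhat := by
      have h1 : κ ≤ g2 (xhat, that) := hκle
      simp only [hg2def] at h1
      have h2 : 0 ≤ ε * phi xhat := by
        have := phi_ge_one xhat
        nlinarith [hεpos]
      rw [hbr2 k that hthatT xhat]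
      linarith
    have hψthat : 0 < ψ that := hψpos that hthatmem.1
    have hWsq : ψ that * ψ that + κ ^ 2
        ≤ dd k (dd k (fun y' => u y' that)) xhat * dd k (dd k (fun y' => u y' that)) xhat := by
      nlinarith [hWval, hψthat, hκpos]
    have hCsteq : (n : ℝ) * M * ε + c' * ((n : ℝ) * ε) = Cst * ε := by
      rw [hCstdef]; ring
    linarith [hB, hdnn, hsum1, hsum2, hεC, hWsq, hCsteq]
  -- pass to the limit δ → 0⁺
  intro x t ht
  have hct : ContinuousAt (fun δ : ℝ => ((Ck + δ)⁻¹ + t)⁻¹) 0 := by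
    have h1 : ContinuousAt (fun δ : ℝ => Ck + δ) 0 := by fun_prop
    have h2 : ContinuousAt (fun δ : ℝ => (Ck + δ)⁻¹) 0 :=
      h1.inv₀ (by simp only [add_zero]; exact ne_of_gt hCk)
    have h3 : ContinuousAt (fun δ : ℝ => (Ck + δ)⁻¹ + t) 0 := h2.add continuousAt_const
    apply h3.inv₀
    simp only [add_zero]
    have ht0 := ht.1
    positivity
  have hlim : Tendsto (fun δ : ℝ => ((Ck + δ)⁻¹ + t)⁻¹) (𝓝[>] 0) (𝓝 ((Ck⁻¹ + t)⁻¹)) := by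
    have := hct.tendsto
    simp only [add_zero] at this
    exact this.mono_left nhdsWithin_le_nhds
  have hle : G2 k (x, t) ≤ (Ck⁻¹ + t)⁻¹ := by
    refine ge_of_tendsto hlim ?_
    filter_upwards [self_mem_nhdsWithin] with δ hδ
    exact key δ hδ x t ht
  rw [hwkey t ht x, one_div]
  exact hle
end

section
/- Let A be a real symmetric positive definite n×n matrix (n ≥ 1), let λ₁,…,λₙ be its eigenvalues listed with multiplicity, and let a₁₁,…,aₙₙ be its diagonal entries. Then the harmonic mean of the eigenvalues is at most the harmonic mean of the diagonal entries: n / (Σ_{i=1}^n 1/λᵢ) ≤ n / (Σ_{i=1}^n 1/aᵢᵢ); equivalently, Σ_{i=1}^n 1/aᵢᵢ ≤ Σ_{i=1}^n 1/λᵢ. -/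
/-!
Writing `A = U diag(λ) Uᴴ` with `U` unitary, the diagonal of `A` is `B λ` for the doubly
stochastic matrix `B i j = ‖U i j‖²`. Jensen's inequality for the convex function `x ↦ x⁻¹`,
applied to each row of `B` and summed over the rows, gives `∑ 1/aᵢᵢ ≤ ∑ 1/λᵢ`.
-/

open Matrix

section DoublyStochastic

variable {n R : Type*} [Fintype n] [DecidableEq n]
  [Field R] [LinearOrder R] [IsStrictOrderedRing R]

theorem ConvexOn.sum_map_mulVec_le_of_mem_doublyStochastic {s : Set R} {f : R → R}
    (hf : ConvexOn R s f) {M : Matrix n n R} (hM : M ∈ doublyStochastic R n) {x : n → R}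
    (hx : ∀ i, x i ∈ s) :
    ∑ i, f ((M *ᵥ x) i) ≤ ∑ i, f (x i) :=
  calc ∑ i, f ((M *ᵥ x) i) ≤ ∑ i, ∑ j, M i j * f (x j) :=
        Finset.sum_le_sum fun i _ => hf.map_sum_le (fun j _ => nonneg_of_mem_doublyStochastic hM)
          (sum_row_of_mem_doublyStochastic hM i) (fun j _ => hx j)
    _ = ∑ j, f (x j) := by
        rw [Finset.sum_comm]
        simp only [← Finset.sum_mul, sum_col_of_mem_doublyStochastic hM, one_mul]

end DoublyStochastic

namespace Matrix

variable {n 𝕜 : Type*} [Fintype n] [DecidableEq n] [RCLike 𝕜]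

theorem map_norm_sq_mem_doublyStochastic {U : Matrix n n 𝕜} (hU : U ∈ unitaryGroup n 𝕜) :
    U.map (‖·‖ ^ 2) ∈ doublyStochastic ℝ n := by
  refine mem_doublyStochastic_iff_sum.mpr ⟨fun _ _ => sq_nonneg _, fun i => ?_, fun j => ?_⟩
  · have h := congr_fun₂ (mem_unitaryGroup_iff.mp hU) i i
    simp only [mul_apply, star_apply, RCLike.star_def, RCLike.mul_conj, one_apply_eq] at h
    exact_mod_cast h
  · have h := congr_fun₂ (mem_unitaryGroup_iff'.mp hU) j j
    simp only [mul_apply, star_apply, RCLike.star_def, RCLike.conj_mul, one_apply_eq] at h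
    exact_mod_cast h

theorem IsHermitian.re_apply_self_eq_mulVec_eigenvalues {A : Matrix n n 𝕜} (hA : A.IsHermitian)
    (i : n) :
    RCLike.re (A i i) =
      ((hA.eigenvectorUnitary : Matrix n n 𝕜).map (‖·‖ ^ 2) *ᵥ hA.eigenvalues) i := by
  conv_lhs => rw [hA.spectral_theorem, Unitary.conjStarAlgAut_apply, mul_apply]
  simp only [mul_diagonal, star_apply, RCLike.star_def, Function.comp_apply, map_sum]
  refine Finset.sum_congr rfl fun j _ => ?_
  rw [mul_right_comm, RCLike.mul_conj]
  norm_cast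

end Matrix

theorem stmt_11_general (n : ℕ) (hn : 1 ≤ n) (A : Matrix (Fin n) (Fin n) ℝ)
    (hpd : A.PosDef) :
    (∑ i, (A i i)⁻¹) ≤ (∑ i, (hpd.isHermitian.eigenvalues i)⁻¹) ∧
    (n : ℝ) / (∑ i, (hpd.isHermitian.eigenvalues i)⁻¹)
      ≤ (n : ℝ) / (∑ i, (A i i)⁻¹) := by
  set hA := hpd.isHermitian
  have hdiag : (fun i => A i i) =
      (hA.eigenvectorUnitary : Matrix (Fin n) (Fin n) ℝ).map (‖·‖ ^ 2) *ᵥ hA.eigenvalues :=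
    funext hA.re_apply_self_eq_mulVec_eigenvalues
  have hinv : ConvexOn ℝ (Set.Ioi 0) fun x : ℝ => x⁻¹ := by
    simpa using convexOn_zpow (𝕜 := ℝ) (-1)
  have hsum : ∑ i, (A i i)⁻¹ ≤ ∑ i, (hA.eigenvalues i)⁻¹ := by
    simpa only [← hdiag] using hinv.sum_map_mulVec_le_of_mem_doublyStochastic
      (map_norm_sq_mem_doublyStochastic hA.eigenvectorUnitary.2) hpd.eigenvalues_pos
  have : Nonempty (Fin n) := Fin.pos_iff_nonempty.mp hn
  exact ⟨hsum, div_le_div_of_nonneg_left n.cast_nonneg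
    (Finset.sum_pos (fun _ _ => inv_pos.mpr hpd.diag_pos) Finset.univ_nonempty) hsum⟩

/-- For a real symmetric positive definite matrix, the harmonic mean of the
eigenvalues is at most the harmonic mean of the diagonal entries; equivalently,
`Σ 1/aᵢᵢ ≤ Σ 1/λᵢ`. -/
theorem stmt_11 (n : ℕ) (hn : 1 ≤ n) (A : Matrix (Fin n) (Fin n) ℝ)
    (hsymm : A.IsSymm) (hpd : A.PosDef) :
    (∑ i, (A i i)⁻¹) ≤ (∑ i, (hpd.isHermitian.eigenvalues i)⁻¹) ∧
    (n : ℝ) / (∑ i, (hpd.isHermitian.eigenvalues i)⁻¹)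
      ≤ (n : ℝ) / (∑ i, (A i i)⁻¹) :=
  stmt_11_general n hn A hpd
end

section
/- Let n ≥ 1, t ≥ 0, let g : ℝⁿ → ℝ be twice continuously differentiable, and let x* be a local minimum of g at which the Hessian ∇²g(x*) is positive definite. Suppose there are constants C₁,…,Cₙ > 0 with ∂²g/∂x_k²(x*) ≤ 1/(t + C_k⁻¹) for each k. Then the harmonic mean of the eigenvalues λ₁,…,λₙ of ∇²g(x*) satisfies HM(λ₁,…,λₙ) ≤ 1/(t + HM(C₁,…,Cₙ)⁻¹), where HM(x) = ( (1/n) Σ_{i=1}^n 1/xᵢ )⁻¹. -/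
open Real Matrix

/-- The harmonic mean of a vector: `HM(x) = ( (1/n) Σ 1/xᵢ )⁻¹ = n / Σ 1/xᵢ`. -/
noncomputable def harmonicMean {n : ℕ} (x : Fin n → ℝ) : ℝ :=
  (n : ℝ) / ∑ i, (x i)⁻¹

/-!
Write `H = U diag(λ) Uᵀ` with `U` orthogonal. Each diagonal entry `H k k = Σᵢ U k i ² λᵢ` is a
convex combination of the eigenvalues, so by convexity of `x ↦ x⁻¹` we get
`(H k k)⁻¹ ≤ Σᵢ U k i ² λᵢ⁻¹`; summing over `k` and using that the columns of `U` are unit vectors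
gives `Σₖ (H k k)⁻¹ ≤ Σᵢ λᵢ⁻¹`. The hypothesis says `(H k k)⁻¹ ≥ t + C k⁻¹`, so
`Σᵢ λᵢ⁻¹ ≥ n t + Σₖ C k⁻¹`, which is the claim after taking harmonic means.
-/

namespace Matrix

variable {ι : Type*} [Fintype ι] [DecidableEq ι]

theorem sum_sq_row_eq_one_of_mem_unitaryGroup {U : Matrix ι ι ℝ} (hU : U ∈ unitaryGroup ι ℝ)
    (k : ι) : ∑ i, U k i ^ 2 = 1 := by
  simpa [mul_apply, one_apply, sq] using congrFun₂ (mem_unitaryGroup_iff.mp hU) k k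

theorem sum_sq_col_eq_one_of_mem_unitaryGroup {U : Matrix ι ι ℝ} (hU : U ∈ unitaryGroup ι ℝ)
    (i : ι) : ∑ k, U k i ^ 2 = 1 := by
  simpa [mul_apply, one_apply, sq] using congrFun₂ (mem_unitaryGroup_iff'.mp hU) i i

theorem IsHermitian.diag_eq_sum_sq_mul_eigenvalues {H : Matrix ι ι ℝ} (hH : H.IsHermitian)
    (k : ι) :
    H k k = ∑ i, (hH.eigenvectorUnitary : Matrix ι ι ℝ) k i ^ 2 * hH.eigenvalues i := by
  conv_lhs => rw [hH.spectral_theorem]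
  simp [Unitary.conjStarAlgAut_apply, mul_apply, diagonal_apply, sq, mul_comm, mul_left_comm]

theorem PosDef.inv_diag_le_sum_sq_mul_inv_eigenvalues {H : Matrix ι ι ℝ} (hH : H.PosDef)
    (k : ι) :
    (H k k)⁻¹ ≤
      ∑ i, (hH.isHermitian.eigenvectorUnitary : Matrix ι ι ℝ) k i ^ 2 *
        (hH.isHermitian.eigenvalues i)⁻¹ := by
  have hconvex : ConvexOn ℝ (Set.Ioi 0) fun x : ℝ => x⁻¹ := by
    simpa only [_root_.zpow_neg_one] using convexOn_zpow (𝕜 := ℝ) (-1 : ℤ)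
  rw [hH.isHermitian.diag_eq_sum_sq_mul_eigenvalues k]
  exact hconvex.map_sum_le (fun i _ => sq_nonneg _)
    (sum_sq_row_eq_one_of_mem_unitaryGroup (Subtype.prop _) k)
    (fun i _ => hH.eigenvalues_pos i)

theorem PosDef.sum_inv_diag_le_sum_inv_eigenvalues {H : Matrix ι ι ℝ} (hH : H.PosDef) :
    ∑ k, (H k k)⁻¹ ≤ ∑ i, (hH.isHermitian.eigenvalues i)⁻¹ :=
  calc ∑ k, (H k k)⁻¹
      ≤ ∑ k, ∑ i, (hH.isHermitian.eigenvectorUnitary : Matrix ι ι ℝ) k i ^ 2 *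
          (hH.isHermitian.eigenvalues i)⁻¹ :=
        Finset.sum_le_sum fun k _ => hH.inv_diag_le_sum_sq_mul_inv_eigenvalues k
    _ = ∑ i, (hH.isHermitian.eigenvalues i)⁻¹ := by
        rw [Finset.sum_comm]
        simp only [← Finset.sum_mul,
          sum_sq_col_eq_one_of_mem_unitaryGroup (Subtype.prop _), one_mul]

end Matrix

theorem harmonicMean_le_of_sum_inv_le {n : ℕ} {x y : Fin n → ℝ} (hy : 0 < ∑ i, (y i)⁻¹)
    (hxy : ∑ i, (y i)⁻¹ ≤ ∑ i, (x i)⁻¹) : harmonicMean x ≤ harmonicMean y :=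
  div_le_div_of_nonneg_left (Nat.cast_nonneg n) hy hxy

theorem harmonicMean_one_div_add_inv {n : ℕ} (hn : n ≠ 0) (t : ℝ) (C : Fin n → ℝ) :
    harmonicMean (fun k => 1 / (t + (C k)⁻¹)) = 1 / (t + (harmonicMean C)⁻¹) := by
  have hn' : (n : ℝ) ≠ 0 := Nat.cast_ne_zero.mpr hn
  simp only [harmonicMean, one_div, inv_inv, Finset.sum_add_distrib, Finset.sum_const,
    Finset.card_univ, Fintype.card_fin, nsmul_eq_mul, inv_div]
  field_simp

theorem stmt_12_general (n : ℕ) (hn : 1 ≤ n) (t : ℝ)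
    (H : Matrix (Fin n) (Fin n) ℝ)
    (hpd : H.PosDef)
    (C : Fin n → ℝ)
    (hdiag : ∀ k, H k k ≤ 1 / (t + (C k)⁻¹)) :
    harmonicMean (hpd.isHermitian.eigenvalues) ≤ 1 / (t + (harmonicMean C)⁻¹) := by
  have : Nonempty (Fin n) := ⟨⟨0, hn⟩⟩
  rw [← harmonicMean_one_div_add_inv (by omega)]
  apply harmonicMean_le_of_sum_inv_le
  · exact Finset.sum_pos (fun k _ => inv_pos.mpr (hpd.diag_pos.trans_le (hdiag k)))
      Finset.univ_nonempty
  · calc ∑ k, (1 / (t + (C k)⁻¹))⁻¹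
        ≤ ∑ k, (H k k)⁻¹ := Finset.sum_le_sum fun k _ => inv_anti₀ hpd.diag_pos (hdiag k)
      _ ≤ _ := hpd.sum_inv_diag_le_sum_inv_eigenvalues

/-- At a local minimum with positive definite Hessian, if the diagonal second
derivatives satisfy `∂²g/∂x_k² ≤ 1/(t + C_k⁻¹)`, then the harmonic mean of the
Hessian eigenvalues is at most `1/(t + HM(C)⁻¹)`. -/
theorem stmt_12 (n : ℕ) (hn : 1 ≤ n) (t : ℝ) (ht : 0 ≤ t)
    (g : EuclideanSpace ℝ (Fin n) → ℝ) (hg : ContDiff ℝ 2 g)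
    (xstar : EuclideanSpace ℝ (Fin n)) (hmin : IsLocalMin g xstar)
    (H : Matrix (Fin n) (Fin n) ℝ)
    (hH : ∀ i j, H i j
      = fderiv ℝ (fun y => fderiv ℝ g y (EuclideanSpace.single j 1)) xstar
          (EuclideanSpace.single i 1))
    (hpd : H.PosDef)
    (C : Fin n → ℝ) (hC : ∀ k, 0 < C k)
    (hdiag : ∀ k, H k k ≤ 1 / (t + (C k)⁻¹)) :
    harmonicMean (hpd.isHermitian.eigenvalues) ≤ 1 / (t + (harmonicMean C)⁻¹) :=
  stmt_12_general n hn t H hpd C hdiag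
end

section
/- Let n ≥ 1, β > 0, T > 0, and let f : ℝⁿ → ℝ be continuously differentiable with bounded gradient. Let V : ℝⁿ → ℝ be bounded and continuous. Suppose u, v : ℝⁿ × [0,T] → ℝ are bounded smooth functions with bounded spatial gradients such that: −∂u/∂t = −∇f·∇u − (1/2)‖∇u‖² + (β⁻¹/2)Δu on ℝⁿ × (0,T); −∂v/∂t = −∇f·∇v + (β⁻¹/2)Δv on ℝⁿ × (0,T); and u(x,T) = v(x,T) = V(x) for all x. Then u(x,t) ≤ v(x,t) for all x ∈ ℝⁿ and all t ∈ [0,T]. -/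
open Real Topology Filter
open scoped RealInnerProductSpace ContDiff

set_option linter.unusedSectionVars false
set_option maxHeartbeats 1000000

theorem aux_deriv_nonpos {g : ℝ → ℝ} {a b d : ℝ} (hab : a < b)
    (hd : HasDerivAt g d a) (h : ∀ t ∈ Set.Ioc a b, g t ≤ g a) : d ≤ 0 := by
  have hs : Filter.Tendsto (slope g a) (𝓝[>] a) (𝓝 d) :=
    (hasDerivAt_iff_tendsto_slope.1 hd).mono_left
      (nhdsWithin_mono _ (by intro x hx; exact ne_of_gt hx))
  refine le_of_tendsto hs ?_
  filter_upwards [Ioo_mem_nhdsGT_of_mem (Set.left_mem_Ico.2 hab)] with t ht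
  have h1 : g t ≤ g a := h t ⟨ht.1, le_of_lt ht.2⟩
  have h2 : 0 < t - a := sub_pos.2 ht.1
  rw [slope_def_field]
  exact div_nonpos_of_nonpos_of_nonneg (by linarith) (le_of_lt h2)


theorem aux_second_deriv_nonpos {g : ℝ → ℝ} (hg : ContDiff ℝ ∞ g)
    (hmax : IsLocalMax g 0) : deriv (deriv g) 0 ≤ 0 := by
  by_contra hpos
  push_neg at hpos
  have hdg : Differentiable ℝ g := hg.differentiable (by simp)
  have hdh : ContDiff ℝ ∞ (deriv g) := (contDiff_infty_iff_deriv.mp hg).2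
  have h0 : deriv g 0 = 0 := hmax.deriv_eq_zero
  -- slope of deriv g tends to deriv (deriv g) 0 > 0, so deriv g > 0 on a right interval
  have hs : Filter.Tendsto (slope (deriv g) 0) (𝓝[>] 0) (𝓝 (deriv (deriv g) 0)) :=
    (hasDerivAt_iff_tendsto_slope.1
      ((hdh.differentiable (by simp)) 0).hasDerivAt).mono_left
      (nhdsWithin_mono _ (by intro x hx; exact ne_of_gt hx))
  have hev : ∀ᶠ x in 𝓝[>] (0:ℝ), 0 < deriv g x := by
    have := hs.eventually (eventually_gt_nhds hpos)
    filter_upwards [this, self_mem_nhdsWithin] with x hx hx'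
    rw [slope_def_field, h0, sub_zero, sub_zero] at hx
    have hx0 : (0:ℝ) < x := hx'
    have h := mul_pos hx hx0
    rwa [div_mul_cancel₀ _ (ne_of_gt hx0)] at h
  obtain ⟨c, hc, hsub⟩ := mem_nhdsGT_iff_exists_Ioo_subset.mp hev
  -- g strictly increasing on [0, c]
  have hmono : StrictMonoOn g (Set.Icc 0 c) := by
    refine strictMonoOn_of_deriv_pos (convex_Icc _ _) (hg.continuous.continuousOn) ?_
    intro x hx
    rw [interior_Icc] at hx
    exact hsub ⟨hx.1, lt_of_lt_of_le hx.2 (by linarith)⟩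
  have hcpos : 0 < c := hc
  -- contradiction with local max
  obtain ⟨δ, hδ, hball⟩ := Metric.eventually_nhds_iff.mp hmax
  set x := min (c/2) (δ/2) with hx
  have hx0 : 0 < x := lt_min (by linarith) (by linarith)
  have h1 : g 0 < g x := hmono ⟨le_rfl, by linarith⟩
    ⟨le_of_lt hx0, le_trans (min_le_left _ _) (by linarith)⟩ hx0
  have h2 : g x ≤ g 0 := by
    refine hball ?_
    simp only [dist_zero_right, Real.norm_eq_abs, abs_of_pos hx0]
    exact lt_of_le_of_lt (min_le_right _ _) (by linarith)
  linarith

variable {E : Type*} [NormedAddCommGroup E] [InnerProductSpace ℝ E] [CompleteSpace E]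

theorem aux_inner_gradient (φ : E → ℝ) (x y : E) :
    ⟪gradient φ x, y⟫ = fderiv ℝ φ x y :=
  InnerProductSpace.toDual_symm_apply

-- differentiability of y ↦ fderiv φ y e
theorem aux_fderiv_app_contDiff {φ : E → ℝ} (hφ : ContDiff ℝ ∞ φ) (e : E) :
    ContDiff ℝ ∞ (fun y => fderiv ℝ φ y e) := by
  have h1 : ContDiff ℝ ∞ (fderiv ℝ φ) := hφ.fderiv_right (by exact_mod_cast le_top)
  exact (ContinuousLinearMap.apply ℝ ℝ e).contDiff.comp h1

-- chain rule along a line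
theorem aux_line_hasDerivAt {φ : E → ℝ} (hφ : Differentiable ℝ φ) (x e : E) (s : ℝ) :
    HasDerivAt (fun s : ℝ => φ (x + s • e)) (fderiv ℝ φ (x + s • e) e) s := by
  have hline : HasDerivAt (fun s : ℝ => x + s • e) e s := by
    simpa using ((hasDerivAt_id s).smul_const e).const_add x
  exact ((hφ (x + s • e)).hasFDerivAt.comp_hasDerivAt s hline)

-- second directional derivative nonpositive at a local max
theorem aux_second_dir_nonpos {φ : E → ℝ} (hφ : ContDiff ℝ ∞ φ) {x : E}
    (hmax : IsLocalMax φ x) (e : E) :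
    fderiv ℝ (fun y => fderiv ℝ φ y e) x e ≤ 0 := by
  set g : ℝ → ℝ := fun s => φ (x + s • e) with hg
  have hline : ContDiff ℝ ∞ (fun s : ℝ => x + s • e) :=
    (contDiff_const.add (contDiff_id.smul contDiff_const))
  have hgc : ContDiff ℝ ∞ g := hφ.comp hline
  have hgmax : IsLocalMax g 0 := by
    have hcont : Continuous (fun s : ℝ => x + s • e) := hline.continuous
    have : Filter.Tendsto (fun s : ℝ => x + s • e) (𝓝 0) (𝓝 x) := by
      simpa using hcont.tendsto 0
    exact (this.eventually hmax).mono (fun s hs => by simpa [hg] using hs)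
  have key := aux_second_deriv_nonpos hgc hgmax
  -- identify deriv (deriv g) 0 with the iterated fderiv expression
  have hd1 : deriv g = fun s => fderiv ℝ φ (x + s • e) e := by
    funext s
    exact (aux_line_hasDerivAt (hφ.differentiable (by simp)) x e s).deriv
  have hd2 : deriv (deriv g) 0 = fderiv ℝ (fun y => fderiv ℝ φ y e) x e := by
    rw [hd1]
    have := aux_line_hasDerivAt
      ((aux_fderiv_app_contDiff hφ e).differentiable (by simp)) x e 0
    simpa using this.deriv
  rw [hd2] at key
  exact key

theorem aux_slice {n : ℕ} {T : ℝ} {w : EuclideanSpace ℝ (Fin n) → ℝ → ℝ}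
    (hw : ContDiffOn ℝ (⊤ : ℕ∞) (fun q : EuclideanSpace ℝ (Fin n) × ℝ => w q.1 q.2)
      (Set.univ ×ˢ Set.Icc 0 T))
    {t : ℝ} (ht : t ∈ Set.Icc (0:ℝ) T) : ContDiff ℝ ∞ (fun y => w y t) := by
  have hw' : ContDiffOn ℝ ∞ (fun q : EuclideanSpace ℝ (Fin n) × ℝ => w q.1 q.2)
      (Set.univ ×ˢ Set.Icc 0 T) := hw.of_le (by simp)
  have hg : ContDiff ℝ ∞ (fun y : EuclideanSpace ℝ (Fin n) => (y, t)) :=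
    contDiff_id.prodMk contDiff_const
  have := hw'.comp (hg.contDiffOn (s := Set.univ))
    (fun y _ => ⟨Set.mem_univ _, ht⟩)
  exact contDiffOn_univ.mp this

theorem aux_tdiff {n : ℕ} {T : ℝ} {w : EuclideanSpace ℝ (Fin n) → ℝ → ℝ}
    (hw : ContDiffOn ℝ (⊤ : ℕ∞) (fun q : EuclideanSpace ℝ (Fin n) × ℝ => w q.1 q.2)
      (Set.univ ×ˢ Set.Icc 0 T))
    (x : EuclideanSpace ℝ (Fin n)) {t : ℝ} (ht : t ∈ Set.Ioo (0:ℝ) T) :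
    DifferentiableAt ℝ (w x) t := by
  have hmem : Set.univ ×ˢ Set.Icc (0:ℝ) T ∈ 𝓝 ((x, t) : EuclideanSpace ℝ (Fin n) × ℝ) :=
    Filter.mem_of_superset ((isOpen_univ.prod isOpen_Ioo).mem_nhds ⟨Set.mem_univ _, ht⟩)
      (Set.prod_mono subset_rfl Set.Ioo_subset_Icc_self)
  have hca : ContDiffAt ℝ ∞ (fun q : EuclideanSpace ℝ (Fin n) × ℝ => w q.1 q.2) (x, t) :=
    (hw.of_le (by simp)).contDiffAt hmem
  have hline : ContDiffAt ℝ ∞ (fun s : ℝ => ((x, s) : EuclideanSpace ℝ (Fin n) × ℝ)) t :=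
    (contDiff_const.prodMk contDiff_id).contDiffAt
  exact (hca.comp t hline).differentiableAt (by simp)

variable {E : Type*} [NormedAddCommGroup E] [InnerProductSpace ℝ E] [CompleteSpace E]

theorem aux_N_contDiff : ContDiff ℝ ∞ (fun y : E => ⟪y, y⟫) :=
  contDiff_id.inner ℝ contDiff_id

theorem aux_N_fderiv (x d : E) : fderiv ℝ (fun y : E => ⟪y, y⟫) x d = 2 * ⟪x, d⟫ := by
  rw [fderiv_inner_apply ℝ differentiableAt_fun_id differentiableAt_fun_id]
  simp [real_inner_comm]
  ring

theorem aux_N_fderiv_fun (e : E) :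
    (fun y : E => fderiv ℝ (fun z : E => ⟪z, z⟫) y e) = fun y => ((2:ℝ) • innerSL ℝ e) y := by
  funext y
  rw [aux_N_fderiv]
  simp [real_inner_comm]

theorem aux_N_second (x e : E) :
    fderiv ℝ (fun y : E => fderiv ℝ (fun z : E => ⟪z, z⟫) y e) x e = 2 * ⟪e, e⟫ := by
  rw [aux_N_fderiv_fun]
  rw [ContinuousLinearMap.fderiv]
  simp


theorem aux_lap_N {n : ℕ} (x : EuclideanSpace ℝ (Fin n)) :
    laplacian (fun y => ⟪y, y⟫) x = 2 * n := by
  unfold laplacian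
  have : ∀ i : Fin n, fderiv ℝ (fun y : EuclideanSpace ℝ (Fin n) =>
      fderiv ℝ (fun z : EuclideanSpace ℝ (Fin n) => ⟪z, z⟫) y (EuclideanSpace.single i 1)) x
      (EuclideanSpace.single i 1) = 2 := by
    intro i
    rw [aux_N_second]
    have : ⟪(EuclideanSpace.single i (1:ℝ)), EuclideanSpace.single i 1⟫ = 1 := by
      rw [real_inner_self_eq_norm_sq, EuclideanSpace.norm_single]
      norm_num
    rw [this]; ring
  simp only [this, Finset.sum_const, Finset.card_univ, Fintype.card_fin, nsmul_eq_mul]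
  ring

theorem aux_lap_linear {n : ℕ} {φ ψ : EuclideanSpace ℝ (Fin n) → ℝ}
    (hφ : ContDiff ℝ ∞ φ) (hψ : ContDiff ℝ ∞ ψ) (a b : ℝ) (x : EuclideanSpace ℝ (Fin n)) :
    laplacian (fun y => a * φ y + b * ψ y) x = a * laplacian φ x + b * laplacian ψ x := by
  unfold laplacian
  rw [Finset.mul_sum, Finset.mul_sum, ← Finset.sum_add_distrib]
  refine Finset.sum_congr rfl fun i _ => ?_
  set e := EuclideanSpace.single i (1:ℝ)
  have hdφ : Differentiable ℝ φ := hφ.differentiable (by simp)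
  have hdψ : Differentiable ℝ ψ := hψ.differentiable (by simp)
  have h1 : (fun y => fderiv ℝ (fun z => a * φ z + b * ψ z) y e)
      = fun y => a * fderiv ℝ φ y e + b * fderiv ℝ ψ y e := by
    funext y
    rw [fderiv_fun_add ((hdφ y).const_mul a) ((hdψ y).const_mul b),
      fderiv_const_mul (hdφ y) a, fderiv_const_mul (hdψ y) b]
    simp
  rw [h1, fderiv_fun_add (((aux_fderiv_app_contDiff hφ e).differentiable
      (by simp) x).const_mul a)
      (((aux_fderiv_app_contDiff hψ e).differentiable (by simp) x).const_mul b),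
    fderiv_const_mul ((aux_fderiv_app_contDiff hφ e).differentiable (by simp) x) a,
    fderiv_const_mul ((aux_fderiv_app_contDiff hψ e).differentiable (by simp) x) b]
  simp

/-- Comparison principle for the HJB equation versus the backward Kolmogorov equation. -/
theorem stmt_15 (n : ℕ) (hn : 1 ≤ n) (β T : ℝ) (hβ : 0 < β) (hT : 0 < T)
    (f : EuclideanSpace ℝ (Fin n) → ℝ) (hf : ContDiff ℝ 1 f)
    (hfg : ∃ M, ∀ x, ‖gradient f x‖ ≤ M)
    (V : EuclideanSpace ℝ (Fin n) → ℝ) (hV : Continuous V)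
    (hVb : ∃ M, ∀ x, |V x| ≤ M)
    (u v : EuclideanSpace ℝ (Fin n) → ℝ → ℝ)
    (hu_smooth : ContDiffOn ℝ (⊤ : ℕ∞)
      (fun q : EuclideanSpace ℝ (Fin n) × ℝ => u q.1 q.2)
      (Set.univ ×ˢ Set.Icc 0 T))
    (hv_smooth : ContDiffOn ℝ (⊤ : ℕ∞)
      (fun q : EuclideanSpace ℝ (Fin n) × ℝ => v q.1 q.2)
      (Set.univ ×ˢ Set.Icc 0 T))
    (hu_bdd : ∃ M, ∀ x, ∀ t ∈ Set.Icc (0 : ℝ) T,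
      |u x t| ≤ M ∧ ‖gradient (fun y => u y t) x‖ ≤ M)
    (hv_bdd : ∃ M, ∀ x, ∀ t ∈ Set.Icc (0 : ℝ) T,
      |v x t| ≤ M ∧ ‖gradient (fun y => v y t) x‖ ≤ M)
    (hu_pde : ∀ x, ∀ t ∈ Set.Ioo (0 : ℝ) T,
      -deriv (u x) t
        = -⟪gradient f x, gradient (fun y => u y t) x⟫
          - (1/2) * ‖gradient (fun y => u y t) x‖ ^ 2
          + (β⁻¹ / 2) * laplacian (fun y => u y t) x)
    (hv_pde : ∀ x, ∀ t ∈ Set.Ioo (0 : ℝ) T,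
      -deriv (v x) t
        = -⟪gradient f x, gradient (fun y => v y t) x⟫
          + (β⁻¹ / 2) * laplacian (fun y => v y t) x)
    (hterm : ∀ x, u x T = V x ∧ v x T = V x) :
    ∀ x, ∀ t ∈ Set.Icc (0 : ℝ) T, u x t ≤ v x t := by
  obtain ⟨Mf, hMf⟩ := hfg
  obtain ⟨Mu, hMu⟩ := hu_bdd
  obtain ⟨Mv, hMv⟩ := hv_bdd
  set S := Mu + Mv with hSdef
  have hSnn : 0 ≤ S := by
    have h1 := (hMu 0 T ⟨le_of_lt hT, le_refl T⟩).1
    have h2 := (hMv 0 T ⟨le_of_lt hT, le_refl T⟩).1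
    have h3 := abs_nonneg (u 0 T)
    have h4 := abs_nonneg (v 0 T)
    simp only [hSdef]; linarith
  have hMf0 : 0 ≤ Mf := le_trans (norm_nonneg _) (hMf 0)
  have habs : ∀ y s, s ∈ Set.Icc (0:ℝ) T → u y s - v y s ≤ S := by
    intro y s hs
    have h1 := abs_le.mp (hMu y s hs).1
    have h2 := abs_le.mp (hMv y s hs).1
    simp only [hSdef]; linarith
  -- Main estimate with auxiliary function
  have key : ∀ ε : ℝ, 0 < ε → ∀ t₀ ∈ Set.Ioo (0:ℝ) T, ∀ x₀, ∀ t₁ ∈ Set.Icc t₀ T,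
      u x₀ t₁ - v x₀ t₁ ≤ ε * ⟪x₀, x₀⟫
        + ε * (β⁻¹ * n + 2 * Mf * Real.sqrt (S/ε) + 1) * (T - t₁) := by
    intro ε hε t₀ ht₀ x₀ t₁ ht₁
    set σ := Real.sqrt (S/ε) with hσdef
    have hσnn : 0 ≤ σ := Real.sqrt_nonneg _
    have hσsq : σ^2 = S/ε := Real.sq_sqrt (div_nonneg hSnn (le_of_lt hε))
    set C := β⁻¹ * (n:ℝ) + 2 * Mf * σ + 1 with hCdef
    have hβinn : (0:ℝ) ≤ β⁻¹ * n := by positivity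
    have hC0 : 0 < C := by
      have : 0 ≤ 2 * Mf * σ := by positivity
      simp only [hCdef]; linarith
    set R := σ + 1 with hRdef
    have hR1 : (1:ℝ) ≤ R := by simp only [hRdef]; linarith
    set Z : EuclideanSpace ℝ (Fin n) × ℝ → ℝ :=
      fun p => u p.1 p.2 - v p.1 p.2 - ε * ⟪p.1, p.1⟫ - ε * C * (T - p.2) with hZdef
    set K : Set (EuclideanSpace ℝ (Fin n) × ℝ) :=
      Metric.closedBall 0 R ×ˢ Set.Icc t₀ T with hKdef
    have hsubK : K ⊆ Set.univ ×ˢ Set.Icc 0 T := by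
      rintro ⟨y, s⟩ ⟨-, hs⟩
      exact ⟨Set.mem_univ _, le_trans (le_of_lt ht₀.1) hs.1, hs.2⟩
    have hZcont : ContinuousOn Z K := by
      have h1 : ContinuousOn (fun p : EuclideanSpace ℝ (Fin n) × ℝ => u p.1 p.2) K :=
        (hu_smooth.continuousOn).mono hsubK
      have h2 : ContinuousOn (fun p : EuclideanSpace ℝ (Fin n) × ℝ => v p.1 p.2) K :=
        (hv_smooth.continuousOn).mono hsubK
      have h3 : Continuous (fun p : EuclideanSpace ℝ (Fin n) × ℝ => ε * ⟪p.1, p.1⟫) :=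
        continuous_const.mul (continuous_fst.inner continuous_fst)
      have h4 : Continuous (fun p : EuclideanSpace ℝ (Fin n) × ℝ => ε * C * (T - p.2)) :=
        continuous_const.mul (continuous_const.sub continuous_snd)
      exact ((h1.sub h2).sub h3.continuousOn).sub h4.continuousOn
    have hKc : IsCompact K := (isCompact_closedBall _ _).prod isCompact_Icc
    have hKne : ((0 : EuclideanSpace ℝ (Fin n)), T) ∈ K := by
      refine ⟨Metric.mem_closedBall.2 ?_, le_of_lt ht₀.2, le_refl T⟩
      simp only [dist_self]; linarith
    obtain ⟨⟨x', t'⟩, hpK, hpmax⟩ := hKc.exists_isMaxOn ⟨_, hKne⟩ hZcont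
    have hZ0 : Z (0, T) = 0 := by
      simp only [hZdef, (hterm 0).1, (hterm 0).2, inner_zero_left]
      ring
    have hZp0 : 0 ≤ Z (x', t') := hZ0 ▸ hpmax hKne
    have ht'I : t' ∈ Set.Icc t₀ T := hpK.2
    have ht'0T : t' ∈ Set.Icc (0:ℝ) T := ⟨le_trans (le_of_lt ht₀.1) ht'I.1, ht'I.2⟩
    have hεS : ε * (S/ε) = S := mul_div_cancel₀ S (ne_of_gt hε)
    have hglob : ∀ q : EuclideanSpace ℝ (Fin n) × ℝ, q.2 ∈ Set.Icc t₀ T →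
        Z q ≤ Z (x', t') := by
      rintro ⟨y, s⟩ hs
      by_cases hy : ‖y‖ ≤ R
      · exact hpmax ⟨Metric.mem_closedBall.2 (by simpa using hy), hs⟩
      · push_neg at hy
        have h1 : u y s - v y s ≤ S := habs y s ⟨le_trans (le_of_lt ht₀.1) hs.1, hs.2⟩
        have h2 : ⟪y, y⟫ = ‖y‖^2 := real_inner_self_eq_norm_sq y
        have h5 : ε * R^2 = S + ε * (2*σ + 1) := by
          have : R^2 = σ^2 + 2*σ + 1 := by simp only [hRdef]; ring
          rw [this, hσsq]; field_simp; ring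
        have h6 : ε * R^2 < ε * ‖y‖^2 := by
          apply mul_lt_mul_of_pos_left _ hε
          have h0R : (0:ℝ) ≤ R := by linarith
          nlinarith
        have h7 : 0 ≤ ε * C * (T - s) := by
          have := hs.2
          have : (0:ℝ) ≤ T - s := by linarith
          positivity
        have h8 : Z (y, s) < 0 := by
          simp only [hZdef]
          rw [h2]
          nlinarith
        linarith
    have hx'σ : ‖x'‖ ≤ σ := by
      have h1 : u x' t' - v x' t' ≤ S := habs x' t' ht'0T
      have h2 : 0 ≤ ε * C * (T - t') := by
        have : (0:ℝ) ≤ T - t' := by linarith [ht'I.2]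
        positivity
      have h3 : ⟪x', x'⟫ = ‖x'‖^2 := real_inner_self_eq_norm_sq x'
      have h4 : ε * ‖x'‖^2 ≤ S := by
        have := hZp0
        simp only [hZdef] at this
        rw [h3] at this
        linarith
      have h5 : ‖x'‖^2 ≤ S/ε := by
        rw [le_div_iff₀ hε]; linarith [h4]
      calc ‖x'‖ = Real.sqrt (‖x'‖^2) := (Real.sqrt_sq (norm_nonneg x')).symm
        _ ≤ Real.sqrt (S/ε) := Real.sqrt_le_sqrt h5
        _ = σ := rfl
    rcases eq_or_lt_of_le ht'I.2 with hTT | hTT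
    · -- max at terminal time: Z ≤ 0 everywhere
      have hZpT : Z (x', t') ≤ 0 := by
        simp only [hZdef, hTT, (hterm x').1, (hterm x').2]
        have h1 : (0:ℝ) ≤ ε * ⟪x', x'⟫ := by
          have := real_inner_self_nonneg (x := x')
          positivity
        simp only [sub_self]
        ring_nf
        nlinarith
      have := le_trans (hglob (x₀, t₁) ht₁) hZpT
      simp only [hZdef] at this
      linarith
    · -- interior max in time: contradiction
      exfalso
      have ht'Ioo : t' ∈ Set.Ioo (0:ℝ) T := ⟨lt_of_lt_of_le ht₀.1 ht'I.1, hTT⟩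
      have hU : ContDiff ℝ ∞ (fun y => u y t') := aux_slice hu_smooth ht'0T
      have hVs : ContDiff ℝ ∞ (fun y => v y t') := aux_slice hv_smooth ht'0T
      have hWs : ContDiff ℝ ∞ (fun y => u y t' - v y t') := hU.sub hVs
      set φ : EuclideanSpace ℝ (Fin n) → ℝ :=
        fun y => u y t' - v y t' - ε * ⟪y, y⟫ with hφdef
      have hφc : ContDiff ℝ ∞ φ := hWs.sub (contDiff_const.mul aux_N_contDiff)
      have hφmax : IsLocalMax φ x' := by
        apply Filter.Eventually.of_forall
        intro y
        have := hglob (y, t') ht'I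
        simp only [hZdef] at this
        simp only [hφdef]
        linarith
      have hgrad0 : fderiv ℝ φ x' = 0 := hφmax.fderiv_eq_zero
      have hWdiff : Differentiable ℝ (fun y => u y t' - v y t') :=
        hWs.differentiable (by simp)
      have hNdiff : Differentiable ℝ (fun y : EuclideanSpace ℝ (Fin n) => ε * ⟪y, y⟫) :=
        (contDiff_const.mul aux_N_contDiff).differentiable (by simp)
      have hWfd : ∀ d, fderiv ℝ (fun y => u y t' - v y t') x' d = ε * (2 * ⟪x', d⟫) := by
        intro d
        have h1 : fderiv ℝ φ x' d = 0 := by rw [hgrad0]; rfl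
        have h2 : fderiv ℝ φ x' d
            = fderiv ℝ (fun y => u y t' - v y t') x' d - ε * (2 * ⟪x', d⟫) := by
          simp only [hφdef]
          rw [fderiv_fun_sub (hWdiff x') (hNdiff x')]
          simp only [ContinuousLinearMap.sub_apply]
          rw [fderiv_const_mul ((aux_N_contDiff.differentiable
            (by simp)) x') ε]
          simp only [ContinuousLinearMap.smul_apply, smul_eq_mul]
          rw [aux_N_fderiv]
        linarith
      -- Laplacian bounds
      have hlapφ : laplacian φ x' ≤ 0 := by
        unfold laplacian
        apply Finset.sum_nonpos
        intro i _
        exact aux_second_dir_nonpos hφc hφmax _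
      have hlapW : laplacian (fun y => u y t' - v y t') x' ≤ 2 * ε * n := by
        have he : (fun y => u y t' - v y t') = fun y => 1 * φ y + ε * ⟪y, y⟫ := by
          funext y; simp only [hφdef]; ring
        rw [he, aux_lap_linear hφc aux_N_contDiff 1 ε x', aux_lap_N]
        linarith
      have hlapUV : laplacian (fun y => u y t') x' - laplacian (fun y => v y t') x'
          = laplacian (fun y => u y t' - v y t') x' := by
        have he2 : (fun y => u y t' - v y t')
            = fun y => 1 * (u y t') + (-1) * (v y t') := by funext y; ring
        rw [he2, aux_lap_linear hU hVs 1 (-1) x']; ring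
      -- gradient terms
      have hgradterm : ⟪gradient f x', gradient (fun y => u y t') x'⟫
          - ⟪gradient f x', gradient (fun y => v y t') x'⟫
          = ε * (2 * ⟪x', gradient f x'⟫) := by
        rw [real_inner_comm (gradient (fun y => u y t') x') (gradient f x'),
          real_inner_comm (gradient (fun y => v y t') x') (gradient f x'),
          aux_inner_gradient, aux_inner_gradient]
        have h3 : fderiv ℝ (fun y => u y t') x' (gradient f x')
            - fderiv ℝ (fun y => v y t') x' (gradient f x')
            = fderiv ℝ (fun y => u y t' - v y t') x' (gradient f x') := by
          rw [fderiv_fun_sub (hU.differentiable (by simp) x')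
            (hVs.differentiable (by simp) x')]
          simp only [ContinuousLinearMap.sub_apply]
        rw [h3, hWfd]
      -- time derivative at the max
      have hud : DifferentiableAt ℝ (u x') t' := aux_tdiff hu_smooth x' ht'Ioo
      have hvd : DifferentiableAt ℝ (v x') t' := aux_tdiff hv_smooth x' ht'Ioo
      have hgd : HasDerivAt (fun s => Z (x', s))
          (deriv (u x') t' - deriv (v x') t' - ε * C * (-1)) t' := by
        have h1 : HasDerivAt (fun s => u x' s - v x' s)
            (deriv (u x') t' - deriv (v x') t') t' := hud.hasDerivAt.sub hvd.hasDerivAt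
        have h2 := h1.sub_const (ε * ⟪x', x'⟫)
        have h3 : HasDerivAt (fun s : ℝ => ε * C * (T - s)) (ε * C * (-1)) t' := by
          have := ((hasDerivAt_id t').const_sub T).const_mul (ε * C)
          simpa using this
        exact h2.sub h3
      have htmax : ∀ s ∈ Set.Ioc t' T, Z (x', s) ≤ Z (x', t') := fun s hs =>
        hglob (x', s) ⟨le_trans ht'I.1 (le_of_lt hs.1), hs.2⟩
      have hd0 : deriv (u x') t' - deriv (v x') t' - ε * C * (-1) ≤ 0 :=
        aux_deriv_nonpos hTT hgd htmax
      -- PDE at the max point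
      have hu1 := hu_pde x' t' ht'Ioo
      have hv1 := hv_pde x' t' ht'Ioo
      -- assemble contradiction
      have hinner : -(ε * (2 * ⟪x', gradient f x'⟫)) ≤ 2 * ε * (σ * Mf) := by
        have h6 := abs_real_inner_le_norm x' (gradient f x')
        have h7 : ‖x'‖ * ‖gradient f x'‖ ≤ σ * Mf :=
          mul_le_mul hx'σ (hMf x') (norm_nonneg _) hσnn
        have h8 := neg_le_abs (⟪x', gradient f x'⟫)
        have h9 : -⟪x', gradient f x'⟫ ≤ σ * Mf := by linarith
        have h10 := mul_le_mul_of_nonneg_left h9 (by positivity : (0:ℝ) ≤ 2*ε)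
        calc -(ε * (2 * ⟪x', gradient f x'⟫)) = 2*ε*(-⟪x', gradient f x'⟫) := by ring
          _ ≤ 2*ε*(σ * Mf) := h10
      have hsq : (0:ℝ) ≤ ‖gradient (fun y => u y t') x'‖ ^ 2 := sq_nonneg _
      have hlap2 : (β⁻¹/2) * (laplacian (fun y => u y t') x'
          - laplacian (fun y => v y t') x') ≤ (β⁻¹/2) * (2 * ε * n) := by
        apply mul_le_mul_of_nonneg_left _ (by positivity)
        rw [hlapUV]; exact hlapW
      have hCexp : ε * C = ε * β⁻¹ * n + 2 * ε * Mf * σ + ε := by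
        simp only [hCdef]; ring
      clear_value S σ C R Z K φ
      linarith [hd0, hu1, hv1, hgradterm, hinner, hsq, hlap2, hCexp, hε]
  -- Now conclude by letting ε → 0
  have main : ∀ x, ∀ t ∈ Set.Ioo (0:ℝ) T, u x t ≤ v x t := by
    intro x t ht
    have hbound : ∀ ε : ℝ, ε ∈ Set.Ioi (0:ℝ) →
        u x t - v x t ≤ ε * ⟪x, x⟫
          + ε * (β⁻¹ * n + 2 * Mf * Real.sqrt (S/ε) + 1) * (T - t) :=
      fun ε hε => key ε hε t ht x t ⟨le_refl t, le_of_lt ht.2⟩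
    have hsqrt_eq : ∀ ε : ℝ, ε ∈ Set.Ioi (0:ℝ) →
        ε * (β⁻¹ * n + 2 * Mf * Real.sqrt (S/ε) + 1)
        = ε * (β⁻¹ * n + 1) + 2 * Mf * (Real.sqrt ε * Real.sqrt S) := by
      intro ε hε
      have hε' : (0:ℝ) < ε := hε
      have h1 : Real.sqrt (S/ε) = Real.sqrt S / Real.sqrt ε := Real.sqrt_div hSnn ε
      have h2 : ε * (Real.sqrt S / Real.sqrt ε) = Real.sqrt ε * Real.sqrt S := by
        rw [mul_div_assoc']
        rw [show ε * Real.sqrt S / Real.sqrt ε = (ε / Real.sqrt ε) * Real.sqrt S by ring]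
        rw [Real.div_sqrt]
      rw [h1]; linear_combination (2*Mf) * h2
    have htend : Filter.Tendsto
        (fun ε : ℝ => ε * ⟪x, x⟫ + (ε * (β⁻¹ * n + 1)
          + 2 * Mf * (Real.sqrt ε * Real.sqrt S)) * (T - t)) (𝓝[>] 0) (𝓝 0) := by
      have hc : Continuous (fun ε : ℝ => ε * ⟪x, x⟫ + (ε * (β⁻¹ * n + 1)
          + 2 * Mf * (Real.sqrt ε * Real.sqrt S)) * (T - t)) :=
        ((continuous_id.mul continuous_const).add
          (((continuous_id.mul continuous_const).add
            (continuous_const.mul (Real.continuous_sqrt.mul continuous_const))).mul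
            continuous_const))
      have := hc.tendsto 0
      simp only [zero_mul, Real.sqrt_zero, mul_zero, add_zero, zero_add, zero_mul] at this
      exact this.mono_left nhdsWithin_le_nhds
    have hle : u x t - v x t ≤ 0 := by
      refine ge_of_tendsto htend ?_
      filter_upwards [self_mem_nhdsWithin] with ε hε
      have := hbound ε hε
      rw [hsqrt_eq ε hε] at this
      linarith [this]
    linarith
  intro x t ht
  rcases eq_or_lt_of_le ht.1 with h0 | h0
  · -- t = 0 : by continuity
    have hcu : ContinuousOn (fun s => u x s - v x s) (Set.Icc 0 T) := by
      have h1 : ContinuousOn (fun s => u x s) (Set.Icc 0 T) :=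
        hu_smooth.continuousOn.comp
          (Continuous.continuousOn (continuous_const.prodMk continuous_id))
          (fun s hs => ⟨Set.mem_univ _, hs⟩)
      have h2 : ContinuousOn (fun s => v x s) (Set.Icc 0 T) :=
        hv_smooth.continuousOn.comp
          (Continuous.continuousOn (continuous_const.prodMk continuous_id))
          (fun s hs => ⟨Set.mem_univ _, hs⟩)
      exact h1.sub h2
    have h0' : t = 0 := h0.symm
    subst h0'
    have hne : (𝓝[Set.Ioo (0:ℝ) T] 0).NeBot := by
      rw [← mem_closure_iff_nhdsWithin_neBot, closure_Ioo (ne_of_lt hT)]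
      exact ⟨le_refl 0, le_of_lt hT⟩
    have htt : Filter.Tendsto (fun s => u x s - v x s) (𝓝[Set.Ioo (0:ℝ) T] 0)
        (𝓝 (u x 0 - v x 0)) :=
      ((hcu 0 ⟨le_refl 0, le_of_lt hT⟩).mono Set.Ioo_subset_Icc_self).tendsto
    have hle : u x 0 - v x 0 ≤ 0 := by
      refine le_of_tendsto htt ?_
      filter_upwards [self_mem_nhdsWithin] with s hs
      linarith [main x s hs]
    linarith
  · rcases eq_or_lt_of_le ht.2 with hTe | hTe
    · rw [hTe, (hterm x).1, (hterm x).2]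
    · exact main x t ⟨h0, hTe⟩
end
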